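/- arXiv:2003.11757 — 6 statements merged into one kernel-verified Lean document; each statement's English description precedes it below -/
import Mathlib

section
/- Every non-zero element x of the braid monoid with zero 𝔹ₙ can be written as a product x = β_{1,q₁} · β_{2,q₂} · ⋯ · β_{n−1,q_{n−1}} with 1 ≤ q_p ≤ p+1 for each 1 ≤ p ≤ n−1, and the tuple (q₁,…,q_{n−1}) satisfying these bounds is uniquely determined by x. -/
/-!
Existence: multiplying a normal form on the right by a generator `β_r` gives `0` or another normal
form. Travelling leftwards through the segments `β_{p,q}`, the generator commutes past those with
`r + 1 < q`, and becomes `β_{r-1}` past those with `q < r` by the braid relation, until it either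
extends a segment with `q = r + 1` or meets a segment with `q = r`, where `β_r β_r = 0`.

Uniqueness: `𝔹ₙ` acts on permutations with an added sink `none`, with `β_r` multiplying `σ` by the
transposition `s_r = (r r+1)` when `σ r < σ (r + 1)` and sending it to `none` otherwise. The normal
form sends the identity to `s_{1,q₁} ⋯ s_{n−1,q_{n−1}}`, where `s_{p,q} = s_p ⋯ s_q`, and the `q_p`
can be read off this permutation.
-/

namespace BraidMonoidZero

/-- Letters: `some i` is the generator `β_{i+1}` (for `i : Fin (n-1)`), `none` is `z`. -/
abbrev Letter (n : ℕ) := Option (Fin (n - 1))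

/-- The defining relations of the braid monoid with zero. -/
inductive Rel (n : ℕ) : FreeMonoid (Letter n) → FreeMonoid (Letter n) → Prop
  | comm (i j : Fin (n - 1)) (h : i.val + 1 < j.val) :
      Rel n (FreeMonoid.of (some j) * FreeMonoid.of (some i))
            (FreeMonoid.of (some i) * FreeMonoid.of (some j))
  | braid (i j : Fin (n - 1)) (h : j.val = i.val + 1) :
      Rel n (FreeMonoid.of (some j) * FreeMonoid.of (some i) * FreeMonoid.of (some j))
            (FreeMonoid.of (some i) * FreeMonoid.of (some j) * FreeMonoid.of (some i))
  | square (i : Fin (n - 1)) :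
      Rel n (FreeMonoid.of (some i) * FreeMonoid.of (some i)) (FreeMonoid.of none)
  | zright (i : Fin (n - 1)) :
      Rel n (FreeMonoid.of (some i) * FreeMonoid.of none) (FreeMonoid.of none)
  | zleft (i : Fin (n - 1)) :
      Rel n (FreeMonoid.of none * FreeMonoid.of (some i)) (FreeMonoid.of none)
  | zz : Rel n (FreeMonoid.of none * FreeMonoid.of none) (FreeMonoid.of none)

/-- The congruence generated by the defining relations. -/
def bmzCon (n : ℕ) : Con (FreeMonoid (Letter n)) := conGen (Rel n)

/-- The braid monoid with zero `𝔹ₙ`. -/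
abbrev BMZ (n : ℕ) := (bmzCon n).Quotient

/-- The zero element `0 = z` of `𝔹ₙ`. -/
def zero (n : ℕ) : BMZ n := (bmzCon n).mk' (FreeMonoid.of none)

/-- The generator `β_{i+1}` of `𝔹ₙ` (so subscripts range over `1, …, n-1`). -/
def gen (n : ℕ) (i : Fin (n - 1)) : BMZ n := (bmzCon n).mk' (FreeMonoid.of (some i))

/-- The generator `β_r`, indexed by its 1-based subscript `r ∈ {1, …, n-1}`. -/
def genNat (n r : ℕ) : BMZ n := if h : r - 1 < n - 1 then gen n ⟨r - 1, h⟩ else 1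

/-- `betaSeg n p q` is `β_{p,q} = β_p β_{p-1} ⋯ β_q` (the identity when `q = p + 1`). -/
def betaSeg (n p q : ℕ) : BMZ n :=
  ((List.range' q (p + 1 - q)).reverse.map (genNat n)).prod

/-- The product `β_{1,q₁} · β_{2,q₂} · ⋯ · β_{n−1,q_{n−1}}`, where the value `q i`
corresponds to `q_{i+1}` for `i : Fin (n-1)`. -/
def normalProd (n : ℕ) (q : Fin (n - 1) → ℕ) : BMZ n :=
  ((List.finRange (n - 1)).map (fun i => betaSeg n (i.val + 1) (q i))).prod

section SegProd

variable {M : Type*} [Monoid M] (f : ℕ → M)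

/-- `segProd f p q = f p * f (p - 1) * ⋯ * f q`, the shape of `betaSeg`. -/
def segProd (p q : ℕ) : M := ((List.range' q (p + 1 - q)).reverse.map f).prod

lemma betaSeg_eq_segProd (n p q : ℕ) : betaSeg n p q = segProd (genNat n) p q := rfl

variable {f}

lemma segProd_of_lt {p q : ℕ} (h : p < q) : segProd f p q = 1 := by
  simp [segProd, show p + 1 - q = 0 by omega]

lemma segProd_eq_mul_right {p q : ℕ} (h : q ≤ p) :
    segProd f p q = segProd f p (q + 1) * f q := by
  rw [segProd, segProd, show p + 1 - q = p + 1 - (q + 1) + 1 by omega, List.range'_succ]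
  simp

lemma segProd_succ_eq_mul_left {p q : ℕ} (h : q ≤ p + 1) :
    segProd f (p + 1) q = f (p + 1) * segProd f p q := by
  rw [segProd, segProd, show p + 1 + 1 - q = p + 1 - q + 1 by omega, List.range'_concat]
  simp [show q + (p + 1 - q) = p + 1 by omega]

lemma segProd_split {p q m : ℕ} (h₁ : q ≤ m + 1) (h₂ : m ≤ p) :
    segProd f p q = segProd f p (m + 1) * segProd f m q := by
  have h := List.range'_append (s := q) (m := m + 1 - q) (n := p - m) (step := 1)
  rw [one_mul, show q + (m + 1 - q) = m + 1 by omega,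
    show m + 1 - q + (p - m) = p + 1 - q by omega] at h
  rw [segProd, segProd, segProd, ← h, show p + 1 - (m + 1) = p - m by omega]
  simp

lemma segProd_mem {S : Submonoid M} {p q : ℕ} (h : ∀ m, q ≤ m → m ≤ p → f m ∈ S) :
    segProd f p q ∈ S :=
  list_prod_mem fun b hb => by
    obtain ⟨m, hm, rfl⟩ := List.mem_map.mp hb
    rw [List.mem_reverse, List.mem_range'_1] at hm
    exact h m hm.1 (by omega)

lemma commute_segProd {p q : ℕ} {a : M} (h : ∀ m, q ≤ m → m ≤ p → Commute (f m) a) :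
    Commute (segProd f p q) a := by
  have hmem (x : M) : x ∈ Submonoid.centralizer {a} ↔ Commute x a := by
    simp [Submonoid.mem_centralizer_iff, Commute, SemiconjBy, eq_comm]
  exact (hmem _).mp (segProd_mem fun m h₁ h₂ => (hmem _).mpr (h m h₁ h₂))

end SegProd

section Relations

variable {n : ℕ}

lemma mk'_eq_of_rel {u v : FreeMonoid (Letter n)} (h : Rel n u v) :
    (bmzCon n).mk' u = (bmzCon n).mk' v :=
  (Con.eq _).mpr (ConGen.Rel.of _ _ h)

lemma genNat_eq_gen {a : ℕ} (h₁ : 1 ≤ a) (h₂ : a ≤ n - 1) :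
    genNat n a = gen n ⟨a - 1, by omega⟩ :=
  dif_pos (by omega)

lemma genNat_succ (i : Fin (n - 1)) : genNat n (i + 1) = gen n i :=
  genNat_eq_gen (by omega) i.isLt

lemma genNat_commute {a b : ℕ} (ha : 1 ≤ a) (hab : a + 1 < b) (hb : b ≤ n - 1) :
    Commute (genNat n a) (genNat n b) := by
  rw [genNat_eq_gen ha (by omega), genNat_eq_gen (by omega) hb]
  have h := mk'_eq_of_rel (Rel.comm (n := n) ⟨a - 1, by omega⟩ ⟨b - 1, by omega⟩ (by simp; omega))
  rw [map_mul, map_mul] at h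
  exact h.symm

lemma genNat_braid {a : ℕ} (ha : 1 ≤ a) (hb : a + 1 ≤ n - 1) :
    genNat n (a + 1) * genNat n a * genNat n (a + 1) =
      genNat n a * genNat n (a + 1) * genNat n a := by
  rw [genNat_eq_gen ha (by omega), genNat_eq_gen (by omega) hb]
  simpa only [map_mul, gen] using mk'_eq_of_rel (Rel.braid (n := n) _ _ (by simp; omega))

lemma genNat_mul_self {a : ℕ} (ha : 1 ≤ a) (hb : a ≤ n - 1) :
    genNat n a * genNat n a = zero n := by
  rw [genNat_eq_gen ha hb]
  simpa only [map_mul, gen, zero] using mk'_eq_of_rel (Rel.square (n := n) _)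

lemma letter_mul_zero (a : Letter n) : (bmzCon n).mk' (.of a) * zero n = zero n := by
  cases a with
  | none => simpa only [map_mul, zero] using mk'_eq_of_rel (Rel.zz (n := n))
  | some i => simpa only [map_mul, zero] using mk'_eq_of_rel (Rel.zright i)

lemma zero_mul_letter (a : Letter n) : zero n * (bmzCon n).mk' (.of a) = zero n := by
  cases a with
  | none => simpa only [map_mul, zero] using mk'_eq_of_rel (Rel.zz (n := n))
  | some i => simpa only [map_mul, zero] using mk'_eq_of_rel (Rel.zleft i)

lemma mul_zero_eq (x : BMZ n) : x * zero n = zero n := by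
  obtain ⟨w, rfl⟩ := (bmzCon n).mk'_surjective x
  induction w using FreeMonoid.inductionOn' with
  | one => exact one_mul _
  | of_mul a w ih => rw [map_mul, mul_assoc, ih, letter_mul_zero]

lemma zero_mul_eq (x : BMZ n) : zero n * x = zero n := by
  obtain ⟨w, rfl⟩ := (bmzCon n).mk'_surjective x
  induction w using FreeMonoid.inductionOn' with
  | one => exact mul_one _
  | of_mul a w ih => rw [map_mul, ← mul_assoc, zero_mul_letter, ih]

end Relations

section Segments

variable {n : ℕ}

lemma betaSeg_mul_genNat_self {p q : ℕ} (hq : 1 ≤ q) (hqp : q ≤ p) (hp : p ≤ n - 1) :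
    betaSeg n p q * genNat n q = zero n := by
  rw [betaSeg_eq_segProd, segProd_eq_mul_right hqp, mul_assoc,
    genNat_mul_self hq (by omega), mul_zero_eq]

lemma commute_betaSeg_genNat {p q r : ℕ} (hr : 1 ≤ r) (hrq : r + 1 < q) (hp : p ≤ n - 1) :
    Commute (betaSeg n p q) (genNat n r) :=
  commute_segProd fun _ hm hm' => (genNat_commute hr (by omega) (by omega)).symm

/-- The braid relation `β_r β_{r-1} β_r = β_{r-1} β_r β_{r-1}` applies where the segment passes
`r`; the remaining letters commute with `β_r` or `β_{r-1}`. -/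
lemma betaSeg_mul_genNat_of_lt {p q r : ℕ} (hq : 1 ≤ q) (hqr : q < r) (hrp : r ≤ p)
    (hp : p ≤ n - 1) : betaSeg n p q * genNat n r = genNat n (r - 1) * betaSeg n p q := by
  obtain ⟨s, rfl⟩ : ∃ s, r = s + 2 := ⟨r - 2, by omega⟩
  rw [show s + 2 - 1 = s + 1 by omega]
  set A := betaSeg n p (s + 3)
  set C := betaSeg n s q
  have hsplit : betaSeg n p q = A * genNat n (s + 2) * genNat n (s + 1) * C := by
    rw [betaSeg_eq_segProd, segProd_split (m := s + 2) (by omega) hrp,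
      segProd_succ_eq_mul_left (by omega), segProd_succ_eq_mul_left (by omega)]
    simp only [mul_assoc, A, C, betaSeg_eq_segProd]
  have hC : Commute C (genNat n (s + 2)) :=
    commute_segProd fun _ hm hm' => genNat_commute (by omega) (by omega) (by omega)
  have hA : Commute A (genNat n (s + 1)) := commute_betaSeg_genNat (by omega) (by omega) hp
  calc betaSeg n p q * genNat n (s + 2)
      = A * (genNat n (s + 2) * genNat n (s + 1) * genNat n (s + 2)) * C := by
        rw [hsplit, mul_assoc _ C, hC.eq]; simp only [mul_assoc]
    _ = A * genNat n (s + 1) * (genNat n (s + 2) * genNat n (s + 1) * C) := by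
        rw [genNat_braid (by omega) (by omega)]; simp only [mul_assoc]
    _ = genNat n (s + 1) * betaSeg n p q := by
        rw [hA.eq, hsplit]; simp only [mul_assoc]

end Segments

section NormalForms

variable {n : ℕ}

/-- `q k` plays the role of `q_{k+1}`, so these are the bounds `1 ≤ q_j ≤ j + 1` for `1 ≤ j ≤ p`. -/
def IsNormal (p : ℕ) (q : ℕ → ℕ) : Prop := ∀ k < p, 1 ≤ q k ∧ q k ≤ k + 2

def nfProd (n p : ℕ) (q : ℕ → ℕ) : BMZ n :=
  ((List.range p).map fun k => betaSeg n (k + 1) (q k)).prod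

def ZeroOrNormal (n p : ℕ) (x : BMZ n) : Prop :=
  x = zero n ∨ ∃ q, IsNormal p q ∧ x = nfProd n p q

lemma nfProd_succ (p : ℕ) (q : ℕ → ℕ) :
    nfProd n (p + 1) q = nfProd n p q * betaSeg n (p + 1) (q p) :=
  List.prod_range_succ _ _

lemma nfProd_congr {p : ℕ} {q q' : ℕ → ℕ} (h : ∀ k < p, q k = q' k) :
    nfProd n p q = nfProd n p q' :=
  congrArg List.prod <| List.map_congr_left fun k hk => by rw [h k (List.mem_range.mp hk)]

lemma nfProd_id (p : ℕ) : nfProd n p (· + 2) = 1 :=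
  List.prod_eq_one fun _ hx => by
    obtain ⟨k, -, rfl⟩ := List.mem_map.mp hx
    exact segProd_of_lt (lt_add_one (k + 1))

lemma ZeroOrNormal.mul_betaSeg {p s : ℕ} {x : BMZ n} (hx : ZeroOrNormal n p x) (hs₁ : 1 ≤ s)
    (hs₂ : s ≤ p + 2) : ZeroOrNormal n (p + 1) (x * betaSeg n (p + 1) s) := by
  obtain rfl | ⟨q, hq, rfl⟩ := hx
  · exact .inl (zero_mul_eq _)
  refine .inr ⟨Function.update q p s, fun k hk => ?_, ?_⟩
  · rcases eq_or_ne k p with rfl | hkp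
    · simpa using ⟨hs₁, hs₂⟩
    · simpa [hkp] using hq k (by omega)
  · rw [nfProd_succ, Function.update_self,
      nfProd_congr (q := Function.update q p s) fun k hk => Function.update_of_ne hk.ne _ _]

lemma zeroOrNormal_nfProd_mul_genNat {p r : ℕ} {q : ℕ → ℕ} (hq : IsNormal p q) (hp : p ≤ n - 1)
    (hr : 1 ≤ r) (hrp : r ≤ p) : ZeroOrNormal n p (nfProd n p q * genNat n r) := by
  induction p generalizing r with
  | zero => omega
  | succ p ih =>
    obtain ⟨hs₁, hs₂⟩ := hq p p.lt_succ_self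
    have hq' : IsNormal p q := fun k hk => hq k (by omega)
    rw [nfProd_succ, mul_assoc]
    obtain h | rfl | h | h : r + 1 = q p ∨ r = q p ∨ r + 1 < q p ∨ q p < r := by omega
    · rw [betaSeg_eq_segProd, ← h, ← segProd_eq_mul_right (by omega)]
      exact ZeroOrNormal.mul_betaSeg (.inr ⟨q, hq', rfl⟩) hr (by omega)
    · exact .inl (by rw [betaSeg_mul_genNat_self hr (by omega) hp, mul_zero_eq])
    · rw [(commute_betaSeg_genNat hr h hp).eq, ← mul_assoc]
      exact (ih hq' (by omega) hr (by omega)).mul_betaSeg hs₁ hs₂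
    · rw [betaSeg_mul_genNat_of_lt hs₁ h (by omega) hp, ← mul_assoc]
      exact (ih hq' (by omega) (by omega) (by omega)).mul_betaSeg hs₁ hs₂

lemma zeroOrNormal (x : BMZ n) : ZeroOrNormal n (n - 1) x := by
  induction x using Submonoid.induction_of_closure_eq_top_right
    (PresentedMonoid.closure_range_of (Rel n)) with
  | one => exact .inr ⟨(· + 2), fun k _ => by dsimp only; omega, (nfProd_id _).symm⟩
  | mul_right x y hy hx =>
    obtain ⟨a, rfl⟩ := hy
    obtain rfl | ⟨q, hq, rfl⟩ := hx
    · exact .inl (zero_mul_eq _)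
    cases a with
    | none => exact .inl (mul_zero_eq _)
    | some i =>
      change ZeroOrNormal n (n - 1) (nfProd n (n - 1) q * gen n i)
      rw [← genNat_succ]
      exact zeroOrNormal_nfProd_mul_genNat hq le_rfl (by omega) (by omega)

end NormalForms

section Permutations

def adjSwap (r : ℕ) : Equiv.Perm ℕ := Equiv.swap r (r + 1)

@[simp] lemma adjSwap_apply_self (r : ℕ) : adjSwap r r = r + 1 := Equiv.swap_apply_left _ _

@[simp] lemma adjSwap_apply_succ (r : ℕ) : adjSwap r (r + 1) = r := Equiv.swap_apply_right _ _

lemma adjSwap_apply_of_ne {r x : ℕ} (h₁ : x ≠ r) (h₂ : x ≠ r + 1) : adjSwap r x = x :=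
  Equiv.swap_apply_of_ne_of_ne h₁ h₂

def swapStep (r : ℕ) (o : Option (Equiv.Perm ℕ)) : Option (Equiv.Perm ℕ) :=
  o.bind fun σ => if σ r < σ (r + 1) then some (σ * adjSwap r) else none

@[simp] lemma swapStep_none (r : ℕ) : swapStep r none = none := rfl

lemma swapStep_some (r : ℕ) (σ : Equiv.Perm ℕ) :
    swapStep r (some σ) = if σ r < σ (r + 1) then some (σ * adjSwap r) else none := rfl

lemma swapStep_swapStep_self (r : ℕ) (o : Option (Equiv.Perm ℕ)) :
    swapStep r (swapStep r o) = none := by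
  cases o with
  | none => rfl
  | some σ =>
    rw [swapStep_some]
    split_ifs with h
    · simpa [swapStep_some] using h.le
    · rfl

lemma swapStep_comm {a b : ℕ} (h : a + 1 < b) (o : Option (Equiv.Perm ℕ)) :
    swapStep a (swapStep b o) = swapStep b (swapStep a o) := by
  cases o with
  | none => rfl
  | some σ =>
    have hab : adjSwap b * adjSwap a = adjSwap a * adjSwap b := by
      ext x; simp only [adjSwap, Equiv.Perm.mul_apply, Equiv.swap_apply_def]; split_ifs <;> omega
    have ha (x) (hx : x = a ∨ x = a + 1) : adjSwap b x = x :=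
      adjSwap_apply_of_ne (by omega) (by omega)
    have hb (x) (hx : x = b ∨ x = b + 1) : adjSwap a x = x :=
      adjSwap_apply_of_ne (by omega) (by omega)
    by_cases hσa : σ a < σ (a + 1) <;> by_cases hσb : σ b < σ (b + 1) <;>
      simp [swapStep_some, hσa, hσb, ha, hb, mul_assoc, hab]

lemma swapStep_braid (a : ℕ) (o : Option (Equiv.Perm ℕ)) :
    swapStep a (swapStep (a + 1) (swapStep a o)) =
      swapStep (a + 1) (swapStep a (swapStep (a + 1) o)) := by
  cases o with
  | none => rfl
  | some σ =>
    have hrel : adjSwap a * (adjSwap (a + 1) * adjSwap a) =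
        adjSwap (a + 1) * (adjSwap a * adjSwap (a + 1)) := by
      ext x; simp only [adjSwap, Equiv.Perm.mul_apply, Equiv.swap_apply_def]; split_ifs <;> omega
    have h₁ : adjSwap a (a + 2) = a + 2 := adjSwap_apply_of_ne (by omega) (by omega)
    have h₂ : adjSwap (a + 1) a = a := adjSwap_apply_of_ne (by omega) (by omega)
    by_cases hxy : σ a < σ (a + 1) <;> by_cases hyz : σ (a + 1) < σ (a + 2) <;>
      by_cases hxz : σ a < σ (a + 2) <;>
      simp [swapStep_some, hxy, hyz, hxz, h₁, h₂, mul_assoc, hrel]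

lemma segProd_adjSwap_apply_of_lt_or_lt {p q x : ℕ} (hx : x < q ∨ p + 1 < x) :
    segProd adjSwap p q x = x := by
  have : segProd adjSwap p q ∈ MulAction.stabilizerSubmonoid (Equiv.Perm ℕ) x :=
    segProd_mem fun m _ _ => adjSwap_apply_of_ne (x := x) (r := m) (by omega) (by omega)
  exact this

lemma segProd_adjSwap_apply_self {p q : ℕ} (h : q ≤ p + 1) : segProd adjSwap p q q = p + 1 := by
  induction h using Nat.decreasingInduction with
  | self => rw [segProd_of_lt (lt_add_one p)]; rfl
  | of_succ q hq ih =>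
    rw [segProd_eq_mul_right (by omega), Equiv.Perm.mul_apply, adjSwap_apply_self, ih]

/-- The permutation to which `nfProd n p q` sends the identity, see `act_nfProd`. -/
def nfPerm (p : ℕ) (q : ℕ → ℕ) : Equiv.Perm ℕ :=
  ((List.range p).map fun k => segProd adjSwap (k + 1) (q k)).prod

lemma nfPerm_succ (p : ℕ) (q : ℕ → ℕ) :
    nfPerm (p + 1) q = nfPerm p q * segProd adjSwap (p + 1) (q p) :=
  List.prod_range_succ _ _

lemma nfPerm_apply_of_le {p x : ℕ} (q : ℕ → ℕ) (hx : p + 2 ≤ x) : nfPerm p q x = x := by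
  induction p with
  | zero => rfl
  | succ p ih =>
    rw [nfPerm_succ, Equiv.Perm.mul_apply, segProd_adjSwap_apply_of_lt_or_lt (.inr (by omega)),
      ih (by omega)]

lemma nfPerm_apply_self {p : ℕ} {q : ℕ → ℕ} (h : q p ≤ p + 2) :
    nfPerm (p + 1) q (q p) = p + 2 := by
  rw [nfPerm_succ, Equiv.Perm.mul_apply, segProd_adjSwap_apply_self h, nfPerm_apply_of_le q le_rfl]

/-- The factors of `nfPerm` are read off one by one: the last factor `s_{p+1,q p}` is the only one
moving `q p`, which it sends to the fixed point `p + 2` of the others. -/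
lemma eq_of_nfPerm_eq {p : ℕ} {q q' : ℕ → ℕ} (hq : IsNormal p q) (hq' : IsNormal p q')
    (h : nfPerm p q = nfPerm p q') : ∀ k < p, q k = q' k := by
  induction p with
  | zero => intro k hk; omega
  | succ p ih =>
    have htop : q p = q' p := (nfPerm (p + 1) q).injective <| by
      rw [nfPerm_apply_self (hq p p.lt_succ_self).2, h, nfPerm_apply_self (hq' p p.lt_succ_self).2]
    have hbot : nfPerm p q = nfPerm p q' := by
      rw [nfPerm_succ, nfPerm_succ, htop] at h
      exact mul_right_cancel h
    intro k hk
    rcases Nat.lt_succ_iff_lt_or_eq.mp hk with hk | rfl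
    · exact ih (fun k hk => hq k (by omega)) (fun k hk => hq' k (by omega)) hbot k hk
    · exact htop

end Permutations

section Action

variable {n : ℕ}

def letterStep : Letter n → Function.End (Option (Equiv.Perm ℕ))
  | none => fun _ => none
  | some i => swapStep (i + 1)

def stepHom (n : ℕ) : BMZ n →* (Function.End (Option (Equiv.Perm ℕ)))ᵐᵒᵖ :=
  (bmzCon n).lift (FreeMonoid.lift fun a => .op (letterStep a)) <|
    Con.conGen_le.mpr fun u v h => (Con.ker_rel _).mpr <| MulOpposite.unop_injective <| by
      funext o
      cases h with
      | comm i j h => exact swapStep_comm (by simpa using h) o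
      | braid i j h =>
        change swapStep (j + 1) (swapStep (i + 1) (swapStep (j + 1) o)) =
          swapStep (i + 1) (swapStep (j + 1) (swapStep (i + 1) o))
        rw [h]
        exact (swapStep_braid _ o).symm
      | square i => exact swapStep_swapStep_self _ o
      | zright i => rfl
      | zleft i => rfl
      | zz => rfl

def act (x : BMZ n) : Option (Equiv.Perm ℕ) → Option (Equiv.Perm ℕ) := (stepHom n x).unop

lemma act_one (o : Option (Equiv.Perm ℕ)) : act (1 : BMZ n) o = o := by
  rw [act, map_one]; rfl

lemma act_mul (x y : BMZ n) (o : Option (Equiv.Perm ℕ)) : act (x * y) o = act y (act x o) := by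
  rw [act, map_mul]; rfl

lemma act_genNat {r : ℕ} (h₁ : 1 ≤ r) (h₂ : r ≤ n - 1) : act (genNat n r) = swapStep r := by
  rw [genNat_eq_gen h₁ h₂]
  change swapStep (r - 1 + 1) = _
  rw [Nat.sub_add_cancel h₁]

lemma act_betaSeg {p q : ℕ} (hq : 1 ≤ q) (hqp : q ≤ p + 1) (hp : p ≤ n - 1) {σ : Equiv.Perm ℕ}
    (hσ : ∀ x, p + 1 ≤ x → σ x = x) :
    act (betaSeg n p q) (some σ) = some (σ * segProd adjSwap p q) := by
  induction hqp using Nat.decreasingInduction with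
  | self => rw [betaSeg_eq_segProd, segProd_of_lt (lt_add_one p), segProd_of_lt (lt_add_one p),
      act_one, mul_one]
  | of_succ q hqp ih =>
    have hσq : σ q < p + 1 := by
      by_contra! hge
      have := σ.injective (hσ _ hge)
      omega
    have hlt : (σ * segProd adjSwap p (q + 1)) q < (σ * segProd adjSwap p (q + 1)) (q + 1) := by
      rwa [Equiv.Perm.mul_apply, Equiv.Perm.mul_apply,
        segProd_adjSwap_apply_of_lt_or_lt (.inl (lt_add_one q)),
        segProd_adjSwap_apply_self (by omega), hσ _ le_rfl]
    rw [betaSeg_eq_segProd, segProd_eq_mul_right (by omega), act_mul, ← betaSeg_eq_segProd,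
      ih (by omega), act_genNat hq (by omega), swapStep_some, if_pos hlt, mul_assoc,
      ← segProd_eq_mul_right (by omega)]

lemma act_nfProd {p : ℕ} {q : ℕ → ℕ} (hp : p ≤ n - 1) (hq : IsNormal p q) :
    act (nfProd n p q) (some 1) = some (nfPerm p q) := by
  induction p with
  | zero => exact act_one _
  | succ p ih =>
    rw [nfProd_succ, act_mul, ih (by omega) fun k hk => hq k (by omega), nfPerm_succ]
    exact act_betaSeg (hq p p.lt_succ_self).1 (hq p p.lt_succ_self).2 hp
      fun x hx => nfPerm_apply_of_le q hx

lemma eq_of_nfProd_eq {p : ℕ} {q q' : ℕ → ℕ} (hp : p ≤ n - 1) (hq : IsNormal p q)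
    (hq' : IsNormal p q') (h : nfProd n p q = nfProd n p q') : ∀ k < p, q k = q' k :=
  eq_of_nfPerm_eq hq hq' <| Option.some_injective _ <| by
    rw [← act_nfProd hp hq, ← act_nfProd hp hq', h]

end Action

lemma normalProd_eq_nfProd {n : ℕ} {q : Fin (n - 1) → ℕ} {q' : ℕ → ℕ}
    (h : ∀ i : Fin (n - 1), q i = q' i) : normalProd n q = nfProd n (n - 1) q' := by
  rw [normalProd, nfProd, ← List.map_coe_finRange_eq_range, List.map_map]
  simp only [Function.comp_def, h]

theorem existsUnique_normal_form_general (n : ℕ) (x : BMZ n) (hx : x ≠ zero n) :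
    ∃! q : Fin (n - 1) → ℕ,
      (∀ i : Fin (n - 1), 1 ≤ q i ∧ q i ≤ i.val + 2) ∧ x = normalProd n q := by
  obtain ⟨q, hq, rfl⟩ := (zeroOrNormal x).resolve_left hx
  refine ⟨fun i => q i, ⟨fun i => hq i i.isLt, (normalProd_eq_nfProd fun _ => rfl).symm⟩, ?_⟩
  rintro q' ⟨hq', hx'⟩
  let q'' : ℕ → ℕ := fun k => if h : k < n - 1 then q' ⟨k, h⟩ else 1
  have hq'' (i : Fin (n - 1)) : q' i = q'' i := by simp [q'']
  have hnormal : IsNormal (n - 1) q'' := fun k hk => by simpa [q'', hk] using hq' ⟨k, hk⟩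
  have hsame := eq_of_nfProd_eq le_rfl hnormal hq <| by rw [← normalProd_eq_nfProd hq'', ← hx']
  funext i
  rw [hq'', hsame i i.isLt]

/-- Every non-zero element `x` of the braid monoid with zero `𝔹ₙ` can be
written as a product `x = β_{1,q₁} · β_{2,q₂} · ⋯ · β_{n−1,q_{n−1}}` with `1 ≤ q_p ≤ p+1`
for each `1 ≤ p ≤ n−1`, and the tuple `(q₁, …, q_{n−1})` satisfying these bounds is
uniquely determined by `x`. (Here `q i` is `q_{i+1}`, so the bound reads
`1 ≤ q i ≤ i.val + 2`.) -/
theorem existsUnique_normal_form (n : ℕ) (hn : 1 ≤ n) (x : BMZ n) (hx : x ≠ zero n) :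
    ∃! q : Fin (n - 1) → ℕ,
      (∀ i : Fin (n - 1), 1 ≤ q i ∧ q i ≤ i.val + 2) ∧ x = normalProd n q :=
  existsUnique_normal_form_general n x hx

end BraidMonoidZero
end

section
/- For every choice of integers q₁, …, q_{n−1} with 1 ≤ q_p ≤ p+1 for each 1 ≤ p ≤ n−1, the product β_{1,q₁} · β_{2,q₂} · ⋯ · β_{n−1,q_{n−1}} is a non-zero element of the braid monoid with zero 𝔹ₙ. -/
/-!
The braid monoid with zero `𝔹ₙ`, realized as the quotient of the free monoid on
letters `β₁, …, β_{n−1}, z` by the congruence generated by the braid relations,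
`β_p β_p = 0`, `β_p z = z = z β_p` and `z z = z`, with `0 := z`.
-/

namespace BraidMonoidZero

/-!
`𝔹ₙ` acts on the right on `Option (ℕ → α)`, for any linear order `α`, by the nil-Coxeter
rule: `β_p` swaps the entries at positions `p - 1` and `p` if they are increasing and sends
the sequence to `none` otherwise, and `0` sends everything to `none`. This respects the
relations: `β_p β_p` always yields `none`, and both sides of a braid relation reverse three
consecutive entries exactly when they are increasing. Starting from the identity sequence,
the factor `β_{p,q_p}` finds at position `p` the entry `p`, larger than everything to its
left, and carries it down to position `q_p - 1` through legal swaps. So the product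
`β_{1,q₁} ⋯ β_{n−1,q_{n−1}}` sends the identity to a sequence rather than to `none`.
-/

open MulOpposite

theorem betaSeg_eq_one {n p q : ℕ} (h : p + 1 ≤ q) : betaSeg n p q = 1 := by
  simp [betaSeg, Nat.sub_eq_zero_of_le h]

theorem betaSeg_succ {n p q : ℕ} (h : q ≤ p + 1) :
    betaSeg n (p + 1) q = genNat n (p + 1) * betaSeg n p q := by
  rw [betaSeg, betaSeg, show p + 1 + 1 - q = p + 1 - q + 1 by omega, List.range'_concat]
  simp [show q + (p + 1 - q) = p + 1 by omega]

section NilCoxeter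

variable {α : Type*} [LinearOrder α]

def swapIfAscent (i : ℕ) (f : ℕ → α) : Option (ℕ → α) :=
  if f i < f (i + 1) then some (f ∘ Equiv.swap i (i + 1)) else none

theorem bind_swapIfAscent_self (i : ℕ) (x : Option (ℕ → α)) :
    (x.bind (swapIfAscent i)).bind (swapIfAscent i) = none := by
  rcases x with _ | f
  · rfl
  · by_cases h : f i < f (i + 1)
    · simp [swapIfAscent, h, h.not_gt]
    · simp [swapIfAscent, h]

theorem bind_swapIfAscent_comm {i j : ℕ} (h : i + 1 < j) (x : Option (ℕ → α)) :
    (x.bind (swapIfAscent j)).bind (swapIfAscent i) =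
      (x.bind (swapIfAscent i)).bind (swapIfAscent j) := by
  rcases x with _ | f
  · rfl
  have hswap : f ∘ Equiv.swap j (j + 1) ∘ Equiv.swap i (i + 1) =
      f ∘ Equiv.swap i (i + 1) ∘ Equiv.swap j (j + 1) := by
    funext k
    simp only [Function.comp_apply, Equiv.swap_apply_def]
    congr 1
    split_ifs <;> omega
  have hfix : ∀ {a b : ℕ}, a + 1 < b ∨ b + 1 < a → Equiv.swap a (a + 1) b = b ∧
      Equiv.swap a (a + 1) (b + 1) = b + 1 := fun hab =>
    ⟨Equiv.swap_apply_of_ne_of_ne (by omega) (by omega),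
      Equiv.swap_apply_of_ne_of_ne (by omega) (by omega)⟩
  obtain ⟨hji, hji'⟩ := hfix (Or.inr h)
  obtain ⟨hij, hij'⟩ := hfix (Or.inl h)
  by_cases hi : f i < f (i + 1) <;> by_cases hj : f j < f (j + 1) <;>
    simp [swapIfAscent, hi, hj, hij, hij', hji, hji', hswap, Function.comp_assoc]

theorem bind_swapIfAscent_braid (i : ℕ) (x : Option (ℕ → α)) :
    ((x.bind (swapIfAscent (i + 1))).bind (swapIfAscent i)).bind (swapIfAscent (i + 1)) =
      ((x.bind (swapIfAscent i)).bind (swapIfAscent (i + 1))).bind (swapIfAscent i) := by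
  rcases x with _ | f
  · rfl
  have hswap :
      f ∘ Equiv.swap (i + 1) (i + 2) ∘ Equiv.swap i (i + 1) ∘ Equiv.swap (i + 1) (i + 2) =
        f ∘ Equiv.swap i (i + 1) ∘ Equiv.swap (i + 1) (i + 2) ∘ Equiv.swap i (i + 1) := by
    funext k
    simp only [Function.comp_apply, Equiv.swap_apply_def]
    congr 1
    split_ifs <;> omega
  by_cases h₁ : f i < f (i + 1) <;> by_cases h₂ : f (i + 1) < f (i + 2) <;>
    by_cases h₃ : f i < f (i + 2) <;>
    simp [swapIfAscent, Equiv.swap_apply_def, h₁, h₂, h₃, hswap, Function.comp_assoc,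
      show i + 1 + 1 = i + 2 from rfl]

variable (α) in
def letterAct {n : ℕ} : Letter n → Function.End (Option (ℕ → α))
  | none => fun _ => none
  | some i => fun x => x.bind (swapIfAscent i)

variable (α) in
def freeNilCoxeterRep (n : ℕ) :
    FreeMonoid (Letter n) →* (Function.End (Option (ℕ → α)))ᵐᵒᵖ :=
  FreeMonoid.lift fun l => op (letterAct α l)

theorem freeNilCoxeterRep_of_mul_of (n : ℕ) (a b : Letter n) :
    freeNilCoxeterRep α n (.of a * .of b) = op (letterAct α b ∘ letterAct α a) := by
  simp only [freeNilCoxeterRep, map_mul, FreeMonoid.lift_eval_of]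
  rfl

theorem freeNilCoxeterRep_of_mul_of_mul_of (n : ℕ) (a b c : Letter n) :
    freeNilCoxeterRep α n (.of a * .of b * .of c) =
      op (letterAct α c ∘ letterAct α b ∘ letterAct α a) := by
  simp only [freeNilCoxeterRep, map_mul, FreeMonoid.lift_eval_of]
  rfl

theorem freeNilCoxeterRep_eq_of_rel {n : ℕ} {a b : FreeMonoid (Letter n)} (h : Rel n a b) :
    freeNilCoxeterRep α n a = freeNilCoxeterRep α n b := by
  cases h with
  | comm i j h =>
    simp only [freeNilCoxeterRep_of_mul_of]
    exact congrArg op (funext (bind_swapIfAscent_comm h))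
  | braid i j h =>
    simp only [freeNilCoxeterRep_of_mul_of_mul_of]
    refine congrArg op (funext fun x => ?_)
    simp only [Function.comp_apply, letterAct, h]
    exact bind_swapIfAscent_braid i x
  | square i =>
    simp only [freeNilCoxeterRep_of_mul_of]
    exact congrArg op (funext (bind_swapIfAscent_self i))
  | zright i => rfl
  | zleft i => rfl
  | zz => rfl

variable (α) in
def nilCoxeterRep (n : ℕ) : BMZ n →* (Function.End (Option (ℕ → α)))ᵐᵒᵖ :=
  (bmzCon n).lift (freeNilCoxeterRep α n)
    (Con.conGen_le.mpr fun _ _ h => (Con.ker_rel _).mpr (freeNilCoxeterRep_eq_of_rel h))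

def nilCoxeterAct {n : ℕ} (x : BMZ n) : Option (ℕ → α) → Option (ℕ → α) :=
  (nilCoxeterRep α n x).unop

theorem nilCoxeterAct_one {n : ℕ} (s : Option (ℕ → α)) :
    nilCoxeterAct (1 : BMZ n) s = s := by
  rw [nilCoxeterAct, map_one, unop_one]
  rfl

theorem nilCoxeterAct_mul {n : ℕ} (x y : BMZ n) (s : Option (ℕ → α)) :
    nilCoxeterAct (x * y) s = nilCoxeterAct y (nilCoxeterAct x s) := by
  rw [nilCoxeterAct, map_mul, unop_mul]
  rfl

theorem nilCoxeterAct_zero {n : ℕ} (s : Option (ℕ → α)) : nilCoxeterAct (zero n) s = none :=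
  rfl

theorem nilCoxeterAct_gen {n : ℕ} (i : Fin (n - 1)) (s : Option (ℕ → α)) :
    nilCoxeterAct (gen n i) s = s.bind (swapIfAscent i) :=
  rfl

theorem nilCoxeterAct_genNat {n r : ℕ} (h₁ : 1 ≤ r) (h₂ : r < n) (s : Option (ℕ → α)) :
    nilCoxeterAct (genNat n r) s = s.bind (swapIfAscent (r - 1)) := by
  rw [genNat, dif_pos (by omega), nilCoxeterAct_gen]

theorem nilCoxeterAct_betaSeg {n p q : ℕ} (hq : 1 ≤ q)
    (hqp : q ≤ p + 1) (hpn : p < n) (f : ℕ → α) (hf : ∀ k < p, f k < f p) :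
    ∃ g, nilCoxeterAct (betaSeg n p q) (some f) = some g ∧
      (∀ l, p < l → g l = f l) ∧ ∀ k ≤ p, g k ≤ f p := by
  induction p, (show q - 1 ≤ p by omega) using Nat.le_induction generalizing f with
  | base =>
    refine ⟨f, by rw [betaSeg_eq_one (by omega), nilCoxeterAct_one], fun _ _ => rfl, ?_⟩
    intro k hk
    rcases hk.lt_or_eq with hk | rfl
    exacts [(hf k hk).le, le_rfl]
  | succ p hp ih =>
    set f' := f ∘ Equiv.swap p (p + 1)
    have hstep : swapIfAscent p f = some f' := if_pos (hf p p.lt_succ_self)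
    have hf' : ∀ k < p, f' k < f' p := fun k hk => by
      simpa [f', Equiv.swap_apply_of_ne_of_ne hk.ne (by omega : k ≠ p + 1)]
        using hf k (by omega)
    obtain ⟨g, hg, hg_gt, hg_le⟩ := ih (by omega) (by omega) f' hf'
    refine ⟨g, ?_, fun l hl => ?_, fun k hk => ?_⟩
    · rw [betaSeg_succ (by omega), nilCoxeterAct_mul, nilCoxeterAct_genNat (by omega) hpn,
        Nat.add_sub_cancel, Option.bind_some, hstep, hg]
    · rw [hg_gt l (by omega)]
      simp [f', Equiv.swap_apply_of_ne_of_ne (by omega : l ≠ p) (by omega : l ≠ p + 1)]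
    · rcases (show k ≤ p ∨ k = p + 1 by omega) with hk | rfl
      · simpa [f'] using hg_le k hk
      · rw [hg_gt _ p.lt_succ_self]
        simpa [f'] using (hf p p.lt_succ_self).le

end NilCoxeter

def IsArrangementBelow (p : ℕ) (f : ℕ → ℕ) : Prop :=
  (∀ k < p, f k < p) ∧ ∀ l, p ≤ l → f l = l

theorem nilCoxeterAct_betaSeg_of_isArrangementBelow {n p q : ℕ} (hq : 1 ≤ q) (hqp : q ≤ p + 1)
    (hpn : p < n) {f : ℕ → ℕ} (hf : IsArrangementBelow p f) :
    ∃ g, nilCoxeterAct (betaSeg n p q) (some f) = some g ∧ IsArrangementBelow (p + 1) g := by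
  obtain ⟨hlt, hfix⟩ := hf
  have hfp : f p = p := hfix p le_rfl
  obtain ⟨g, hg, hg_gt, hg_le⟩ :=
    nilCoxeterAct_betaSeg hq hqp hpn f fun k hk => hfp.symm ▸ hlt k hk
  refine ⟨g, hg, fun k hk => ?_, fun l hl => ?_⟩
  · exact Nat.lt_succ_of_le (hfp ▸ hg_le k (Nat.le_of_lt_succ hk))
  · rw [hg_gt l hl, hfix l (by omega)]

theorem nilCoxeterAct_prod_betaSeg {n m : ℕ} (hm : m ≤ n - 1) (s : Fin m → ℕ)
    (hs : ∀ i, 1 ≤ s i ∧ s i ≤ i.val + 2) :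
    ∃ g, nilCoxeterAct ((List.finRange m).map fun i => betaSeg n (i.val + 1) (s i)).prod
      (some id) = some g ∧ IsArrangementBelow (m + 1) g := by
  induction m with
  | zero => exact ⟨id, rfl, fun k hk => hk, fun _ _ => rfl⟩
  | succ m ih =>
    obtain ⟨f, hf, hf_arr⟩ := ih (by omega) (s ∘ Fin.castSucc) fun i => hs i.castSucc
    obtain ⟨g, hg, hg_arr⟩ := nilCoxeterAct_betaSeg_of_isArrangementBelow (n := n)
      (hs (Fin.last m)).1 (hs (Fin.last m)).2 (by omega) hf_arr
    refine ⟨g, ?_, hg_arr⟩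
    rw [List.finRange_succ_last, List.map_append, List.map_map, List.prod_append,
      List.map_singleton, List.prod_singleton, nilCoxeterAct_mul]
    rw [← hf] at hg
    exact hg

theorem normalProd_ne_zero_general (n : ℕ) (q : Fin (n - 1) → ℕ)
    (hq : ∀ i : Fin (n - 1), 1 ≤ q i ∧ q i ≤ i.val + 2) :
    normalProd n q ≠ zero n := by
  intro h
  obtain ⟨g, hg, -⟩ := nilCoxeterAct_prod_betaSeg le_rfl q hq
  rw [← normalProd, h, nilCoxeterAct_zero] at hg
  exact Option.some_ne_none g hg.symm

/-- For every choice of integers `q₁, …, q_{n−1}` with `1 ≤ q_p ≤ p+1`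
for each `1 ≤ p ≤ n−1` (here `q i = q_{i+1}`, so the bound reads `1 ≤ q i ≤ i.val + 2`),
the product `β_{1,q₁} · β_{2,q₂} · ⋯ · β_{n−1,q_{n−1}}` is a non-zero element of the
braid monoid with zero `𝔹ₙ`. -/
theorem normalProd_ne_zero (n : ℕ) (hn : 1 ≤ n) (q : Fin (n - 1) → ℕ)
    (hq : ∀ i : Fin (n - 1), 1 ≤ q i ∧ q i ≤ i.val + 2) :
    normalProd n q ≠ zero n :=
  normalProd_ne_zero_general n q hq

end BraidMonoidZero
end

section
/- Let n ≥ 1 and let q₁, …, q_{n−1} be integers with 1 ≤ q_p ≤ p+1 for each p. Let σ ∈ Sₙ be the permutation σ = c₁ ∘ c₂ ∘ ⋯ ∘ c_{n−1}, where c_p = s_p ∘ s_{p−1} ∘ ⋯ ∘ s_{q_p} (with c_p = id when q_p = p+1). Then for each 1 ≤ p ≤ n−1, q_p equals the number of r with 1 ≤ r ≤ p+1 and σ⁻¹(r) ≤ σ⁻¹(p+1). -/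
/-!
Statement 3: Let `n ≥ 1` and let `q₁, …, q_{n−1}` be integers with `1 ≤ q_p ≤ p+1`.
Let `σ ∈ Sₙ` be the permutation `σ = c₁ ∘ c₂ ∘ ⋯ ∘ c_{n−1}` where
`c_p = s_p ∘ s_{p−1} ∘ ⋯ ∘ s_{q_p}` (with `c_p = id` when `q_p = p + 1`), and `s_r` is
the transposition exchanging `r` and `r+1`.  Then for each `1 ≤ p ≤ n−1`, `q_p` equals
the number of `r` with `1 ≤ r ≤ p+1` and `σ⁻¹(r) ≤ σ⁻¹(p+1)`.

We model `{1, …, n}` by `Fin n` (0-indexed), so the 1-based element `r` corresponds to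
the `Fin n` value `r - 1`, and `s_r` swaps the `Fin n` values `r - 1` and `r`.
-/

namespace PermNormalForm

/-- The transposition `s_r` exchanging `r` and `r+1` in `{1, …, n}`, i.e. swapping the
0-indexed positions `r - 1` and `r` of `Fin n` (the identity for out-of-range `r`). -/
def sNat (n r : ℕ) : Equiv.Perm (Fin n) :=
  if h : 0 < r ∧ r < n then Equiv.swap ⟨r - 1, by omega⟩ ⟨r, h.2⟩ else 1

/-- `cSeg n p q` is `c = s_p ∘ s_{p−1} ∘ ⋯ ∘ s_q` (the identity when `q = p + 1`);
recall that multiplication of permutations is composition. -/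
def cSeg (n p q : ℕ) : Equiv.Perm (Fin n) :=
  ((List.range' q (p + 1 - q)).reverse.map (sNat n)).prod

/-- The permutation `σ = c₁ ∘ c₂ ∘ ⋯ ∘ c_{n−1}` with `c_p = s_p ∘ ⋯ ∘ s_{q_p}`,
where the value `q i` corresponds to `q_{i+1}` for `i : Fin (n-1)`. -/
def sigmaOf (n : ℕ) (q : Fin (n - 1) → ℕ) : Equiv.Perm (Fin n) :=
  ((List.finRange (n - 1)).map (fun i => cSeg n (i.val + 1) (q i))).prod

/-!
Write `σ = T * B` with `T = c₁ ⋯ c_p` and `B = c_{p+1} ⋯ c_{n-1}`. Each `c_k` moves only points of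
`{1, …, k+1}`, so `T` preserves `{1, …, p+1}`, and since `c₁, …, c_{p-1}` fix `p+1`,
`T⁻¹(p+1) = c_p⁻¹(p+1) = q_p`. On `{1, …, k}` the inverse `c_k⁻¹` is increasing with values in
`{1, …, k+1}`, so `B⁻¹` is increasing on `{1, …, p+1}`. Hence for `r ≤ p+1` we have
`σ⁻¹ r ≤ σ⁻¹ (p+1)` iff `T⁻¹ r ≤ q_p`, and as `T⁻¹` permutes `{1, …, p+1}` there are exactly `q_p`
such `r`.
-/

open Equiv MulAction Set
open scoped Finset Pointwise

theorem mem_stabilizer_of_forall_notMem_apply_eq {α : Type*} {g : Perm α} {s : Set α}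
    (h : ∀ x ∉ s, g x = x) : g ∈ stabilizer (Perm α) s :=
  stabilizer_compl (G := Perm α) (s := s) ▸ fixingSubgroup_le_stabilizer (Perm α) sᶜ
    ((mem_fixingSubgroup_iff _).2 h)

theorem strictMonoOn_inv_prod_range' {α : Type*} [Preorder α] {C : ℕ → Perm α}
    {s : ℕ → Set α} (hmaps : ∀ k, MapsTo ⇑(C k)⁻¹ (s k) (s (k + 1)))
    (hmono : ∀ k, StrictMonoOn ⇑(C k)⁻¹ (s k)) (m len : ℕ) :
    StrictMonoOn ⇑((List.range' m len).map C).prod⁻¹ (s m) := by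
  induction len generalizing m with
  | zero => exact strictMono_id.strictMonoOn _
  | succ len ih =>
    rw [List.range'_succ, List.map_cons, List.prod_cons, mul_inv_rev, Perm.coe_mul]
    exact (ih (m + 1)).comp (hmono m) (hmaps m)

theorem card_filter_mul_inv_le_eq_card_Iic {α : Type*} [LinearOrder α] [Fintype α]
    [LocallyFiniteOrderBot α] {T B : Perm α} {m t : α}
    (hT : T ∈ stabilizer (Perm α) (Iic m)) (hB : StrictMonoOn ⇑B⁻¹ (Iic m)) (ht : t ≤ m) :
    #{j | j ≤ m ∧ (T * B)⁻¹ j ≤ (T * B)⁻¹ t} = #(Finset.Iic (T⁻¹ t)) := by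
  have hT' : ∀ j, T⁻¹ j ≤ m ↔ j ≤ m := mem_stabilizer_set.1 (inv_mem hT)
  refine Finset.card_equiv T⁻¹ fun j ↦ ?_
  simp only [Finset.mem_filter, Finset.mem_univ, true_and, Finset.mem_Iic, mul_inv_rev,
    Perm.mul_apply]
  constructor
  · rintro ⟨hj, hle⟩
    exact (hB.le_iff_le ((hT' j).2 hj) ((hT' t).2 ht)).1 hle
  · intro hle
    have hj : j ≤ m := (hT' j).1 (hle.trans ((hT' t).2 ht))
    exact ⟨hj, (hB.le_iff_le ((hT' j).2 hj) ((hT' t).2 ht)).2 hle⟩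

variable {n : ℕ}

theorem cSeg_eq_one_of_succ_eq {p q : ℕ} (h : p + 1 = q) : cSeg n p q = 1 := by
  simp [cSeg, ← h]

theorem cSeg_succ {p q : ℕ} (h : q ≤ p + 1) : cSeg n (p + 1) q = sNat n (p + 1) * cSeg n p q := by
  rw [cSeg, cSeg, show p + 1 + 1 - q = p + 1 - q + 1 by omega, List.range'_concat,
    show q + 1 * (p + 1 - q) = p + 1 by omega]
  simp

theorem cSeg_apply_val {p q : ℕ} (hq : 1 ≤ q) (hqp : q ≤ p + 1) (hp : p < n) (x : Fin n) :
    (cSeg n p q x : ℕ) = if x.val + 1 < q ∨ p < x.val then x.val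
      else if x.val + 1 = q then p else x.val - 1 := by
  induction p, (show q - 1 ≤ p by omega) using Nat.le_induction with
  | base =>
    rw [cSeg_eq_one_of_succ_eq (by omega)]
    split_ifs <;> simp <;> omega
  | succ p _ ih =>
    rw [cSeg_succ (show q ≤ p + 1 by omega), Perm.mul_apply, sNat, dif_pos ⟨by omega, hp⟩,
      swap_apply_def]
    have ih := ih (by omega) (by omega)
    split_ifs at ih ⊢ <;> simp_all [Fin.ext_iff] <;> omega

theorem cSeg_apply_of_lt {p q : ℕ} (hq : 1 ≤ q) (hqp : q ≤ p + 1) (hp : p < n) {x : Fin n}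
    (hx : p < x.val) : cSeg n p q x = x :=
  Fin.ext <| by rw [cSeg_apply_val hq hqp hp]; simp [hx]

theorem cSeg_inv_apply_self {p q : ℕ} (hq : 1 ≤ q) (hqp : q ≤ p + 1) (hp : p < n) :
    (cSeg n p q)⁻¹ ⟨p, hp⟩ = ⟨q - 1, by omega⟩ := by
  rw [Perm.inv_eq_iff_eq, Fin.ext_iff, cSeg_apply_val hq hqp hp]
  simp only
  split_ifs <;> omega

theorem cSeg_inv_apply_val {p q : ℕ} (hq : 1 ≤ q) (hqp : q ≤ p + 1) (hp : p < n) {x : Fin n}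
    (hx : x.val < p) : ((cSeg n p q)⁻¹ x : ℕ) = if x.val + 1 < q then x.val else x.val + 1 := by
  set y : Fin n := ⟨if x.val + 1 < q then x.val else x.val + 1, by split_ifs <;> omega⟩
  suffices cSeg n p q y = x by rw [Perm.inv_eq_iff_eq.mpr this.symm]
  rw [Fin.ext_iff, cSeg_apply_val hq hqp hp]
  simp only [y]
  split_ifs <;> omega

theorem cSeg_inv_strictMonoOn {p q : ℕ} (hq : 1 ≤ q) (hqp : q ≤ p + 1) (hp : p < n) :
    StrictMonoOn ⇑(cSeg n p q)⁻¹ {x : Fin n | x.val < p} := by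
  intro x hx y hy hxy
  rw [Fin.lt_def, cSeg_inv_apply_val hq hqp hp hx, cSeg_inv_apply_val hq hqp hp hy]
  rw [Fin.lt_def] at hxy
  split_ifs <;> omega

theorem cSeg_inv_mapsTo {p q : ℕ} (hq : 1 ≤ q) (hqp : q ≤ p + 1) (hp : p < n) :
    MapsTo ⇑(cSeg n p q)⁻¹ {x : Fin n | x.val < p} {x | x.val ≤ p} := by
  intro x hx
  change x.val < p at hx
  change ((cSeg n p q)⁻¹ x).val ≤ p
  rw [cSeg_inv_apply_val hq hqp hp hx]
  split_ifs <;> omega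

/-- `sigmaFactor n q k` is the factor `c_{k+1}` of `sigmaOf n q`, extended by the identity
for `k ≥ n - 1`. -/
def sigmaFactor (n : ℕ) (q : Fin (n - 1) → ℕ) (k : ℕ) : Perm (Fin n) :=
  if h : k < n - 1 then cSeg n (k + 1) (q ⟨k, h⟩) else 1

section sigmaFactor

variable {q : Fin (n - 1) → ℕ}

theorem sigmaOf_eq_prod_range :
    sigmaOf n q = ((List.range (n - 1)).map (sigmaFactor n q)).prod := by
  rw [sigmaOf, ← List.map_coe_finRange_eq_range, List.map_map]
  congr 1
  refine List.map_congr_left fun k _ ↦ ?_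
  simp [sigmaFactor, k.isLt]

theorem sigmaOf_eq_mul (i : Fin (n - 1)) :
    sigmaOf n q = ((List.range (i + 1)).map (sigmaFactor n q)).prod *
      ((List.range' (i + 1) (n - 2 - i)).map (sigmaFactor n q)).prod := by
  have hsplit := List.range'_append_1 (s := 0) (m := i + 1) (n := n - 2 - i)
  rw [Nat.zero_add, show i + 1 + (n - 2 - i) = n - 1 by omega] at hsplit
  rw [sigmaOf_eq_prod_range, ← List.prod_append, ← List.map_append, List.range_eq_range',
    List.range_eq_range', hsplit]

theorem sigmaFactor_apply_of_lt (hq : ∀ i : Fin (n - 1), 1 ≤ q i ∧ q i ≤ i.val + 2) {k : ℕ}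
    {x : Fin n} (hx : k + 1 < x.val) : sigmaFactor n q k x = x := by
  unfold sigmaFactor
  split_ifs with h
  · exact cSeg_apply_of_lt (hq _).1 (hq _).2 (by omega) hx
  · rfl

theorem sigmaFactor_inv_mapsTo (hq : ∀ i : Fin (n - 1), 1 ≤ q i ∧ q i ≤ i.val + 2) (k : ℕ) :
    MapsTo ⇑(sigmaFactor n q k)⁻¹ {x | x.val ≤ k} {x | x.val ≤ k + 1} := by
  unfold sigmaFactor
  split_ifs with h
  · exact (cSeg_inv_mapsTo (hq _).1 (hq _).2 (by omega)).mono_left fun _ ↦ Nat.lt_succ_of_le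
  · exact fun _ ↦ Nat.le_succ_of_le

theorem sigmaFactor_inv_strictMonoOn (hq : ∀ i : Fin (n - 1), 1 ≤ q i ∧ q i ≤ i.val + 2)
    (k : ℕ) : StrictMonoOn ⇑(sigmaFactor n q k)⁻¹ {x | x.val ≤ k} := by
  unfold sigmaFactor
  split_ifs with h
  · exact (cSeg_inv_strictMonoOn (hq _).1 (hq _).2 (by omega)).mono fun _ ↦ Nat.lt_succ_of_le
  · exact strictMono_id.strictMonoOn _

theorem prod_map_sigmaFactor_range_apply_of_lt
    (hq : ∀ i : Fin (n - 1), 1 ≤ q i ∧ q i ≤ i.val + 2) {m : ℕ} {x : Fin n} (hx : m < x.val) :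
    ((List.range m).map (sigmaFactor n q)).prod x = x := by
  refine mem_stabilizer_iff.1 <| Subgroup.list_prod_mem (stabilizer (Perm (Fin n)) x)
    fun g hg ↦ ?_
  obtain ⟨k, hk, rfl⟩ := List.mem_map.1 hg
  exact mem_stabilizer_iff.2 (sigmaFactor_apply_of_lt hq (by rw [List.mem_range] at hk; omega))

theorem prod_map_sigmaFactor_range_mem_stabilizer
    (hq : ∀ i : Fin (n - 1), 1 ≤ q i ∧ q i ≤ i.val + 2) (m : ℕ) :
    ((List.range m).map (sigmaFactor n q)).prod ∈
      stabilizer (Perm (Fin n)) {x : Fin n | x.val ≤ m} :=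
  mem_stabilizer_of_forall_notMem_apply_eq fun _ hx ↦
    prod_map_sigmaFactor_range_apply_of_lt hq (not_le.1 hx)

theorem prod_map_sigmaFactor_range_succ_inv_apply
    (hq : ∀ i : Fin (n - 1), 1 ≤ q i ∧ q i ≤ i.val + 2) (i : Fin (n - 1)) :
    ((List.range (i + 1)).map (sigmaFactor n q)).prod⁻¹ ⟨i + 1, by omega⟩ =
      ⟨q i - 1, by have := (hq i).2; omega⟩ := by
  have hfix := prod_map_sigmaFactor_range_apply_of_lt hq (x := ⟨i + 1, by omega⟩) (m := i)
    (by simp)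
  rw [List.range_succ, List.map_append, List.prod_append, List.map_singleton,
    List.prod_singleton, mul_inv_rev, Perm.mul_apply, Perm.inv_eq_iff_eq.2 hfix.symm]
  simp only [sigmaFactor, dif_pos i.isLt]
  exact cSeg_inv_apply_self (hq i).1 (hq i).2 _

end sigmaFactor

/-- With `σ = c₁ ∘ ⋯ ∘ c_{n−1}` as above, for each `1 ≤ p ≤ n−1` the
value `q_p` equals the number of `r` with `1 ≤ r ≤ p+1` and `σ⁻¹(r) ≤ σ⁻¹(p+1)`.
(For `i : Fin (n-1)` we have `p = i + 1`; the 1-based elements `r ∈ {1, …, p+1}` are the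
`Fin n` values `j` with `j ≤ i + 1`, and `p + 1` is the `Fin n` value `i + 1`.) -/
theorem normal_form_count (n : ℕ) (q : Fin (n - 1) → ℕ)
    (hq : ∀ i : Fin (n - 1), 1 ≤ q i ∧ q i ≤ i.val + 2) :
    ∀ i : Fin (n - 1),
      q i = (Finset.univ.filter (fun j : Fin n =>
          j.val ≤ i.val + 1 ∧
            (sigmaOf n q)⁻¹ j ≤ (sigmaOf n q)⁻¹ ⟨i.val + 1, by have h := i.isLt; omega⟩)).card := by
  intro i
  have hB := strictMonoOn_inv_prod_range' (sigmaFactor_inv_mapsTo hq)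
    (sigmaFactor_inv_strictMonoOn hq) (i + 1) (n - 2 - i)
  have hcount := card_filter_mul_inv_le_eq_card_Iic (m := (⟨i + 1, by omega⟩ : Fin n))
    (prod_map_sigmaFactor_range_mem_stabilizer hq (i + 1)) hB le_rfl
  rw [prod_map_sigmaFactor_range_succ_inv_apply hq, Fin.card_Iic, ← sigmaOf_eq_mul] at hcount
  exact (Nat.sub_add_cancel (hq i).1).symm.trans hcount.symm

end PermNormalForm
end

section
/- Let ⪯₀ ⊴ ⪯₁ be shuffles on S(s,t) with ⪯₀ ≠ ⪯₁. Then there exist elements (i|k), (j|ℓ) ∈ S(s,t) with i < j such that (i|k) is the immediate ⪯₀-successor of (j|ℓ), (i|k) ⪯₁ (j|ℓ), and the total order ⪯ obtained from ⪯₀ by transposing (i|k) and (j|ℓ) (i.e., agreeing with ⪯₀ on all pairs except that (i|k) ⪯ (j|ℓ)) is a shuffle on S(s,t) satisfying ⪯₀ ⊴ ⪯ ⊴ ⪯₁. -/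
/-!
Shuffles on `S(s,t)`.  Fix `a ≥ 1` and tuples `s, t ∈ ℕᵃ` with `sᵢ ≤ tᵢ`.  We let
`S(s,t) = {(i|k) : 1 ≤ i ≤ a, sᵢ < k ≤ tᵢ}` (with indices `i` modelled by `Fin a`),
a *shuffle* on `S(s,t)` is a total order `⪯` such that `(i|k) ⪯ (i|ℓ)` whenever
`k ≤ ℓ`, and `⪯ ⊴ ⪯′` means that `(i|k) ⪯ (j|ℓ)` implies `(i|k) ⪯′ (j|ℓ)` whenever
`i < j`.
-/

namespace GrayShuffle

/-- The set `S(s,t)`: pairs `(i|k)` with `sᵢ < k ≤ tᵢ`. -/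
def Idx (a : ℕ) (s t : Fin a → ℕ) : Type :=
  {p : Fin a × ℕ // s p.1 < p.2 ∧ p.2 ≤ t p.1}

/-- A shuffle on `S(s,t)`: a total order `⪯` such that `(i|k) ⪯ (i|ℓ)` whenever
`sᵢ < k ≤ ℓ ≤ tᵢ`. -/
structure Shuffle (a : ℕ) (s t : Fin a → ℕ) where
  le : Idx a s t → Idx a s t → Prop
  refl : ∀ x, le x x
  trans : ∀ x y z, le x y → le y z → le x z
  antisymm : ∀ x y, le x y → le y x → x = y
  total : ∀ x y, le x y ∨ le y x
  compat : ∀ x y, x.1.1 = y.1.1 → x.1.2 ≤ y.1.2 → le x y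

variable {a : ℕ} {s t : Fin a → ℕ}

/-- `Dominates r r'` is the relation `⪯ ⊴ ⪯′`. -/
def Dominates (r r' : Shuffle a s t) : Prop :=
  ∀ x y : Idx a s t, x.1.1 < y.1.1 → r.le x y → r'.le x y

/-- `y` is the immediate `r`-successor of `x`. -/
def ImmediateSucc (r : Shuffle a s t) (x y : Idx a s t) : Prop :=
  r.le x y ∧ x ≠ y ∧ ∀ z, r.le x z → r.le z y → z = x ∨ z = y

/-- The total order obtained from `r` by transposing `u` and `v`: it agrees with `r`
on all pairs except that `u ⪯ v` (rather than `v ⪯ u`). -/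
def transposeLe (r : Shuffle a s t) (u v : Idx a s t) :
    Idx a s t → Idx a s t → Prop :=
  fun x y => (x = u ∧ y = v) ∨ (¬(x = v ∧ y = u) ∧ r.le x y)

/-!
Among the pairs ordered one way by `⪯₀` and the other way by `⪯₁`, take one with the fewest
elements between them. It is adjacent in `⪯₀`: an element strictly in between splits it into
two shorter pairs, and by transitivity of `⪯₁` one of them is again reversed. If this pair is
`(j|ℓ) ⋖₀ (i|k)`, then `i < j`, since `⪯₀ ⊴ ⪯₁` preserves it when `i > j` and the shuffle
condition fixes it in both orders when `i = j`. Transposing two adjacent elements amounts to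
relabelling them by the swap `(i|k) ↔ (j|ℓ)`, so the result is a total order; it is a shuffle
since `i ≠ j`, and it lies between `⪯₀` and `⪯₁` since only this one pair changed, towards `⪯₁`.
-/

theorem exists_adjacent_of_not_rel {α : Type*} [Finite α] {r₀ r₁ : α → α → Prop}
    [IsPartialOrder α r₀] [IsTrans α r₁] {x₀ y₀ : α} (hxy₀ : r₀ x₀ y₀) (hne₀ : x₀ ≠ y₀)
    (hr₁₀ : ¬ r₁ x₀ y₀) :
    ∃ x y, r₀ x y ∧ x ≠ y ∧ (∀ z, r₀ x z → r₀ z y → z = x ∨ z = y) ∧ ¬ r₁ x y := by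
  let between : α × α → Set α := fun p => {z | r₀ p.1 z ∧ r₀ z p.2}
  let reversed : Set (α × α) := {p | r₀ p.1 p.2 ∧ p.1 ≠ p.2 ∧ ¬ r₁ p.1 p.2}
  obtain ⟨⟨x, y⟩, ⟨hxy, hne, hr₁⟩, hmin⟩ := Set.exists_min_image reversed
    (fun p => (between p).ncard) (Set.toFinite _) ⟨(x₀, y₀), hxy₀, hne₀, hr₁₀⟩
  refine ⟨x, y, hxy, hne, fun z hxz hzy => ?_, hr₁⟩
  by_contra! hz
  have hleft : between (x, z) ⊂ between (x, y) :=
    ⟨fun w hw => ⟨hw.1, trans_of r₀ hw.2 hzy⟩,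
      fun hsub => hz.2 (antisymm_of r₀ hzy (hsub ⟨hxy, refl_of r₀ y⟩).2)⟩
  have hright : between (z, y) ⊂ between (x, y) :=
    ⟨fun w hw => ⟨trans_of r₀ hxz hw.1, hw.2⟩,
      fun hsub => hz.1 (antisymm_of r₀ (hsub ⟨refl_of r₀ x, hxy⟩).1 hxz)⟩
  have hsplit : (x, z) ∈ reversed ∨ (z, y) ∈ reversed := by
    by_cases hxz₁ : r₁ x z
    · exact Or.inr ⟨hzy, hz.2, fun hzy₁ => hr₁ (trans_of r₁ hxz₁ hzy₁)⟩
    · exact Or.inl ⟨hxz, Ne.symm hz.1, hxz₁⟩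
  rcases hsplit with hp | hp
  · exact (Set.ncard_lt_ncard hleft (Set.toFinite _)).not_ge (hmin _ hp)
  · exact (Set.ncard_lt_ncard hright (Set.toFinite _)).not_ge (hmin _ hp)

instance : Finite (Idx a s t) :=
  Set.Finite.to_subtype <| (Set.finite_univ.prod (Set.finite_Iic (Finset.univ.sup t))).subset
    fun p hp => ⟨Set.mem_univ _, hp.2.trans (Finset.le_sup (Finset.mem_univ p.1))⟩

instance : DecidableEq (Idx a s t) := by
  unfold Idx; infer_instance

instance (r : Shuffle a s t) : IsLinearOrder (Idx a s t) r.le where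
  refl := r.refl
  trans := r.trans
  antisymm := r.antisymm
  total := r.total

theorem Shuffle.le_eq_of_le_imp {r₀ r₁ : Shuffle a s t}
    (h : ∀ x y, r₀.le x y → r₁.le x y) : r₀.le = r₁.le := by
  refine funext₂ fun x y => propext ⟨h x y, fun hxy => (r₀.total x y).elim id fun hyx => ?_⟩
  obtain rfl := r₁.antisymm _ _ hxy (h y x hyx)
  exact hyx

theorem exists_immediateSucc_not_le {r₀ r₁ : Shuffle a s t} (hne : r₀.le ≠ r₁.le) :
    ∃ x y, ImmediateSucc r₀ x y ∧ ¬ r₁.le x y := by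
  obtain ⟨x, y, hxy, hr₁⟩ : ∃ x y, r₀.le x y ∧ ¬ r₁.le x y := by
    by_contra! h
    exact hne (Shuffle.le_eq_of_le_imp h)
  have hxy_ne : x ≠ y := by
    rintro rfl
    exact hr₁ (r₁.refl x)
  obtain ⟨x, y, hxy, hne, hadj, hr₁⟩ := exists_adjacent_of_not_rel hxy hxy_ne hr₁
  exact ⟨x, y, ⟨hxy, hne, hadj⟩, hr₁⟩

section Transpose

variable {r : Shuffle a s t} {u v : Idx a s t}

theorem ImmediateSucc.le_or_le (h : ImmediateSucc r v u) (z : Idx a s t) :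
    r.le z v ∨ r.le u z := by
  rcases r.total z v with hzv | hvz
  · exact Or.inl hzv
  rcases r.total z u with hzu | huz
  · rcases h.2.2 z hvz hzu with rfl | rfl
    · exact Or.inl (r.refl z)
    · exact Or.inr (r.refl z)
  · exact Or.inr huz

theorem ImmediateSucc.le_iff_le_of_ne_left (h : ImmediateSucc r v u) {z : Idx a s t}
    (hzv : z ≠ v) : r.le v z ↔ r.le u z :=
  ⟨fun hvz => (h.le_or_le z).resolve_left fun hzv' => hzv (r.antisymm _ _ hzv' hvz),
    r.trans _ _ _ h.1⟩

theorem ImmediateSucc.le_iff_le_of_ne_right (h : ImmediateSucc r v u) {z : Idx a s t}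
    (hzu : z ≠ u) : r.le z v ↔ r.le z u :=
  ⟨fun hzv' => r.trans _ _ _ hzv' h.1,
    fun hzu' => (h.le_or_le z).resolve_right fun huz => hzu (r.antisymm _ _ hzu' huz)⟩

theorem ImmediateSucc.transposeLe_iff (h : ImmediateSucc r v u) {x y : Idx a s t} :
    transposeLe r u v x y ↔ r.le (Equiv.swap u v x) (Equiv.swap u v y) := by
  have huv : u ≠ v := h.2.1.symm
  have hnot_le : ¬ r.le u v := fun hle => huv (r.antisymm _ _ hle h.1)
  unfold transposeLe
  rcases eq_or_ne x u with hxu | hxu <;> rcases eq_or_ne x v with hxv | hxv <;>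
    rcases eq_or_ne y u with hyu | hyu <;> rcases eq_or_ne y v with hyv | hyv <;>
    simp_all [Equiv.swap_apply_of_ne_of_ne, h.le_iff_le_of_ne_left, h.le_iff_le_of_ne_right,
      r.refl]

def Shuffle.transpose (r : Shuffle a s t) (h : ImmediateSucc r v u) (hne : u.1.1 ≠ v.1.1) :
    Shuffle a s t where
  le := transposeLe r u v
  refl _ := h.transposeLe_iff.2 (r.refl _)
  trans _ _ _ hxy hyz :=
    h.transposeLe_iff.2 (r.trans _ _ _ (h.transposeLe_iff.1 hxy) (h.transposeLe_iff.1 hyz))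
  antisymm _ _ hxy hyx :=
    (Equiv.swap u v).injective (r.antisymm _ _ (h.transposeLe_iff.1 hxy) (h.transposeLe_iff.1 hyx))
  total _ _ := (r.total _ _).imp h.transposeLe_iff.2 h.transposeLe_iff.2
  compat x y hi hk := Or.inr ⟨by rintro ⟨rfl, rfl⟩; exact hne hi.symm, r.compat x y hi hk⟩

theorem dominates_transpose (h : ImmediateSucc r v u) (hlt : u.1.1 < v.1.1) :
    Dominates r (r.transpose h hlt.ne) := by
  refine fun x y hxy hr => Or.inr ⟨?_, hr⟩
  rintro ⟨rfl, rfl⟩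
  exact hlt.not_gt hxy

theorem transpose_dominates {r₁ : Shuffle a s t} (h : ImmediateSucc r v u) (hne : u.1.1 ≠ v.1.1)
    (hdom : Dominates r r₁) (huv : r₁.le u v) : Dominates (r.transpose h hne) r₁ := by
  rintro x y hxy (⟨rfl, rfl⟩ | ⟨-, hr⟩)
  · exact huv
  · exact hdom x y hxy hr

end Transpose

theorem Dominates.fst_lt_fst_of_not_le {r₀ r₁ : Shuffle a s t} (hdom : Dominates r₀ r₁)
    {u v : Idx a s t} (hvu : r₀.le v u) (hne : v ≠ u) (hr₁ : ¬ r₁.le v u) : u.1.1 < v.1.1 := by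
  by_contra! hle
  rcases hle.lt_or_eq with hlt | heq
  · exact hr₁ (hdom v u hlt hvu)
  rcases le_total v.1.2 u.1.2 with hk | hk
  · exact hr₁ (r₁.compat v u heq hk)
  · exact hne (r₀.antisymm _ _ hvu (r₀.compat u v heq.symm hk))

theorem statement4_general (a : ℕ) (s t : Fin a → ℕ)
    (r₀ r₁ : Shuffle a s t) (hdom : Dominates r₀ r₁) (hne : r₀.le ≠ r₁.le) :
    ∃ u v : Idx a s t, u.1.1 < v.1.1 ∧ ImmediateSucc r₀ v u ∧ r₁.le u v ∧
      ∃ r' : Shuffle a s t, r'.le = transposeLe r₀ u v ∧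
        Dominates r₀ r' ∧ Dominates r' r₁ := by
  obtain ⟨v, u, hcov, hr₁⟩ := exists_immediateSucc_not_le hne
  have hlt : u.1.1 < v.1.1 := hdom.fst_lt_fst_of_not_le hcov.1 hcov.2.1 hr₁
  have huv : r₁.le u v := (r₁.total v u).resolve_left hr₁
  exact ⟨u, v, hlt, hcov, huv, r₀.transpose hcov hlt.ne, rfl, dominates_transpose hcov hlt,
    transpose_dominates hcov hlt.ne hdom huv⟩

/-- Let `⪯₀ ⊴ ⪯₁` be shuffles on `S(s,t)` with `⪯₀ ≠ ⪯₁`.  Then there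
exist `(i|k) = u` and `(j|ℓ) = v` in `S(s,t)` with `i < j` such that `u` is the
immediate `⪯₀`-successor of `v`, `u ⪯₁ v`, and the total order `⪯` obtained from `⪯₀`
by transposing `u` and `v` is a shuffle satisfying `⪯₀ ⊴ ⪯ ⊴ ⪯₁`. -/
theorem statement4 (a : ℕ) (ha : 1 ≤ a) (s t : Fin a → ℕ) (hst : ∀ i, s i ≤ t i)
    (r₀ r₁ : Shuffle a s t) (hdom : Dominates r₀ r₁) (hne : r₀.le ≠ r₁.le) :
    ∃ u v : Idx a s t, u.1.1 < v.1.1 ∧ ImmediateSucc r₀ v u ∧ r₁.le u v ∧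
      ∃ r' : Shuffle a s t, r'.le = transposeLe r₀ u v ∧
        Dominates r₀ r' ∧ Dominates r' r₁ :=
  statement4_general a s t r₀ r₁ hdom hne

end GrayShuffle
end

section
/- Let ⪯₀ ⊴ ⪯₁ ⊴ ⋯ ⊴ ⪯_q be a chain of shuffles on S(s,t) (q ≥ 0), and let x be a cut-point for the pair (⪯₀, ⪯_q). Then for every 0 ≤ p ≤ q, every (i|k) ∈ S(s,x) and every (j|ℓ) ∈ S(x,t), one has (i|k) ⪯_p (j|ℓ); in particular, x is a cut-point for every pair (⪯_p, ⪯_{p′}) with 0 ≤ p, p′ ≤ q. -/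
/-!
Shuffles on `S(s,t)`.  Fix `a ≥ 1` and tuples `s, t ∈ ℕᵃ` with `sᵢ ≤ tᵢ`.  We let
`S(s,t) = {(i|k) : 1 ≤ i ≤ a, sᵢ < k ≤ tᵢ}` (with indices `i` modelled by `Fin a`),
a *shuffle* on `S(s,t)` is a total order `⪯` such that `(i|k) ⪯ (i|ℓ)` whenever
`k ≤ ℓ`, and `⪯ ⊴ ⪯′` means that `(i|k) ⪯ (j|ℓ)` implies `(i|k) ⪯′ (j|ℓ)` whenever
`i < j`.
-/

namespace GrayShuffle

variable {a : ℕ} {s t : Fin a → ℕ}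

/-- `x` is a cut-point for the pair of shuffles `(r, r')`: `sᵢ ≤ xᵢ ≤ tᵢ` for all `i`,
`s ≠ x ≠ t`, and `(i|k) ⪯ (j|ℓ)` as well as `(i|k) ⪯′ (j|ℓ)` for all
`(i|k) ∈ S(s,x)` and `(j|ℓ) ∈ S(x,t)`. -/
def IsCutPoint (r r' : Shuffle a s t) (x : Fin a → ℕ) : Prop :=
  (∀ i, s i ≤ x i ∧ x i ≤ t i) ∧ s ≠ x ∧ x ≠ t ∧
    ∀ u v : Idx a s t, u.1.2 ≤ x u.1.1 → x v.1.1 < v.1.2 → r.le u v ∧ r'.le u v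

theorem Dominates.refl (r : Shuffle a s t) : Dominates r r :=
  fun _ _ _ h => h

theorem Dominates.trans {r₁ r₂ r₃ : Shuffle a s t} (h₁₂ : Dominates r₁ r₂)
    (h₂₃ : Dominates r₂ r₃) : Dominates r₁ r₃ :=
  fun u v huv h => h₂₃ u v huv (h₁₂ u v huv h)

theorem Dominates.of_chain {q : ℕ} {r : Fin (q + 1) → Shuffle a s t}
    (hchain : ∀ p : Fin q, Dominates (r p.castSucc) (r p.succ)) {m n : Fin (q + 1)}
    (hmn : m ≤ n) : Dominates (r m) (r n) := by
  induction n using Fin.induction with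
  | zero => rw [Fin.le_zero_iff.mp hmn]; exact Dominates.refl _
  | succ p ih =>
    rcases hmn.eq_or_lt with rfl | hlt
    · exact Dominates.refl _
    · exact (ih (Fin.le_castSucc_iff.mpr hlt)).trans (hchain p)

/-- For `i < j` the relation `u ⪯₀ v` propagates up to `⪯`; for `i > j`, `v ⪯ u` would
propagate up to `⪯₁` and contradict `u ⪯₁ v`. -/
theorem Shuffle.le_of_dominates_of_dominates {r₀ r r₁ : Shuffle a s t}
    (h₀ : Dominates r₀ r) (h₁ : Dominates r r₁) {u v : Idx a s t}
    (hle₀ : r₀.le u v) (hle₁ : r₁.le u v) (hsame : u.1.1 = v.1.1 → u.1.2 ≤ v.1.2) :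
    r.le u v := by
  rcases lt_trichotomy u.1.1 v.1.1 with hlt | heq | hgt
  · exact h₀ u v hlt hle₀
  · exact r.compat u v heq (hsame heq)
  · refine (r.total u v).resolve_right fun hvu => hgt.ne' ?_
    rw [r₁.antisymm u v hle₁ (h₁ v u hgt hvu)]

theorem statement5_general (a : ℕ) (s t : Fin a → ℕ)
    (q : ℕ) (r : Fin (q + 1) → Shuffle a s t)
    (hchain : ∀ p : Fin q, Dominates (r p.castSucc) (r p.succ))
    (x : Fin a → ℕ) (hx : IsCutPoint (r 0) (r (Fin.last q)) x) :
    (∀ (p : Fin (q + 1)) (u v : Idx a s t),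
        u.1.2 ≤ x u.1.1 → x v.1.1 < v.1.2 → (r p).le u v) ∧
      ∀ p p' : Fin (q + 1), IsCutPoint (r p) (r p') x := by
  obtain ⟨hbounds, hs, ht, hcut⟩ := hx
  have hle : ∀ (p : Fin (q + 1)) (u v : Idx a s t),
      u.1.2 ≤ x u.1.1 → x v.1.1 < v.1.2 → (r p).le u v := fun p u v hu hv =>
    Shuffle.le_of_dominates_of_dominates (Dominates.of_chain hchain (Fin.zero_le p))
      (Dominates.of_chain hchain (Fin.le_last p)) (hcut u v hu hv).1 (hcut u v hu hv).2
      fun heq => (hu.trans_lt (heq ▸ hv)).le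
  exact ⟨hle, fun p p' => ⟨hbounds, hs, ht, fun u v hu hv => ⟨hle p u v hu hv, hle p' u v hu hv⟩⟩⟩

/-- Let `⪯₀ ⊴ ⪯₁ ⊴ ⋯ ⊴ ⪯_q` be a chain of shuffles on `S(s,t)` and
let `x` be a cut-point for the pair `(⪯₀, ⪯_q)`.  Then for every `0 ≤ p ≤ q`, every
`(i|k) ∈ S(s,x)` and every `(j|ℓ) ∈ S(x,t)` one has `(i|k) ⪯_p (j|ℓ)`; in particular
`x` is a cut-point for every pair `(⪯_p, ⪯_{p′})` with `0 ≤ p, p′ ≤ q`. -/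
theorem statement5 (a : ℕ) (ha : 1 ≤ a) (s t : Fin a → ℕ) (hst : ∀ i, s i ≤ t i)
    (q : ℕ) (r : Fin (q + 1) → Shuffle a s t)
    (hchain : ∀ p : Fin q, Dominates (r p.castSucc) (r p.succ))
    (x : Fin a → ℕ) (hx : IsCutPoint (r 0) (r (Fin.last q)) x) :
    (∀ (p : Fin (q + 1)) (u v : Idx a s t),
        u.1.2 ≤ x u.1.1 → x v.1.1 < v.1.2 → (r p).le u v) ∧
      ∀ p p' : Fin (q + 1), IsCutPoint (r p) (r p') x :=
  statement5_general a s t q r hchain x hx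

end GrayShuffle
end

section
/- Let ⪯₀ ⊴ ⪯₁ be shuffles on S(s,t) such that the pair (s,t) is non-linear and the pair (⪯₀, ⪯₁) admits a cut-point. Then (⪯₀, ⪯₁) admits a right-angled cut-point. -/
/-!
Shuffles on `S(s,t)`.  Fix `a ≥ 1` and tuples `s, t ∈ ℕᵃ` with `sᵢ ≤ tᵢ`.  We let
`S(s,t) = {(i|k) : 1 ≤ i ≤ a, sᵢ < k ≤ tᵢ}` (with indices `i` modelled by `Fin a`),
a *shuffle* on `S(s,t)` is a total order `⪯` such that `(i|k) ⪯ (i|ℓ)` whenever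
`k ≤ ℓ`, and `⪯ ⊴ ⪯′` means that `(i|k) ⪯ (j|ℓ)` implies `(i|k) ⪯′ (j|ℓ)` whenever
`i < j`.
-/

namespace GrayShuffle

variable {a : ℕ} {s t : Fin a → ℕ}

/-- A cut-point `x` for `(r, r')` is *right-angled* if for every `i` with
`sᵢ < xᵢ < tᵢ`, either `(i|xᵢ+1)` is not the immediate `r`-successor of `(i|xᵢ)`, or
`(i|xᵢ+1)` is not the immediate `r'`-successor of `(i|xᵢ)`. -/
def IsRightAngledCutPoint (r r' : Shuffle a s t) (x : Fin a → ℕ) : Prop :=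
  IsCutPoint r r' x ∧
    ∀ (i : Fin a) (h1 : s i < x i) (h2 : x i < t i),
      ¬ ImmediateSucc r ⟨(i, x i), h1, le_of_lt h2⟩
          ⟨(i, x i + 1), Nat.lt_succ_of_lt h1, h2⟩ ∨
      ¬ ImmediateSucc r' ⟨(i, x i), h1, le_of_lt h2⟩
          ⟨(i, x i + 1), Nat.lt_succ_of_lt h1, h2⟩

/-- The pair `(s,t)` is non-linear: `sᵢ < tᵢ` for at least two distinct indices. -/
def NonLinear (s t : Fin a → ℕ) : Prop :=
  ∃ i j : Fin a, i ≠ j ∧ s i < t i ∧ s j < t j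

/-!
A cut-point `x` is a tuple whose down-set `S(s,x)` is an initial segment of both shuffles.
If `(i|c+1)` is the immediate successor of `(i|c)` in both shuffles, moving the `i`-th
coordinate of the cut from `c` to `c + 1` or to `c - 1` keeps it an initial segment of both.
Hence each coordinate of `x` can be pushed up to the first value `≥ xᵢ`, or down to the last
value `≤ xᵢ`, at which this fails (`sᵢ` and `tᵢ` qualify), and any combination of these
endpoints is a right-angled cut-point unless it equals `s` or `t`. All upper endpoints avoid `s`
and all lower ones avoid `t`; if they are `t` and `s`, take the upper endpoint at one
coordinate with `sᵢ < tᵢ` and lower ones elsewhere: non-linearity supplies a second such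
coordinate, so this is neither `s` nor `t`.
-/

/-- `n` is reached from `m` by unit steps, each one leaving a value that satisfies `P`. -/
def IsRun (P : ℕ → Prop) (m n : ℕ) : Prop :=
  (m ≤ n ∧ ∀ c, m ≤ c → c < n → P c) ∨ (n ≤ m ∧ ∀ c, n < c → c ≤ m → P c)

lemma IsRun.mono {P Q : ℕ → Prop} {m n : ℕ} (h : IsRun P m n) (hPQ : ∀ c, P c → Q c) :
    IsRun Q m n := by
  rcases h with ⟨hmn, hP⟩ | ⟨hnm, hP⟩
  · exact Or.inl ⟨hmn, fun c h1 h2 => hPQ c (hP c h1 h2)⟩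
  · exact Or.inr ⟨hnm, fun c h1 h2 => hPQ c (hP c h1 h2)⟩

lemma exists_isRun_ge (P : ℕ → Prop) {m hi : ℕ} (hm : m ≤ hi) (hhi : ¬P hi) :
    ∃ n, m ≤ n ∧ n ≤ hi ∧ ¬P n ∧ IsRun P m n := by
  classical
  have hex : ∃ n, m ≤ n ∧ ¬P n := ⟨hi, hm, hhi⟩
  obtain ⟨hmn, hn⟩ := Nat.find_spec hex
  refine ⟨Nat.find hex, hmn, Nat.find_min' hex ⟨hm, hhi⟩, hn, Or.inl ⟨hmn, fun c h1 h2 => ?_⟩⟩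
  by_contra hc
  exact Nat.find_min hex h2 ⟨h1, hc⟩

lemma exists_isRun_le (P : ℕ → Prop) {lo m : ℕ} (hm : lo ≤ m) (hlo : ¬P lo) :
    ∃ n, lo ≤ n ∧ n ≤ m ∧ ¬P n ∧ IsRun P m n := by
  classical
  refine ⟨Nat.findGreatest (¬P ·) m, Nat.le_findGreatest hm hlo, Nat.findGreatest_le m,
    Nat.findGreatest_spec (P := (¬P ·)) hm hlo, Or.inr ⟨Nat.findGreatest_le m, fun c h1 h2 => ?_⟩⟩
  by_contra hc
  exact Nat.findGreatest_is_greatest h1 h2 hc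

namespace ImmediateSucc

variable {r : Shuffle a s t} {e e' : Idx a s t}

lemma le_of_le (h : ImmediateSucc r e e') {v : Idx a s t} (hev : r.le e v) (hve : v ≠ e)
    (hve' : v ≠ e') : r.le e' v :=
  (r.total e' v).resolve_right fun hve'' => (h.2.2 v hev hve'').elim hve hve'

lemma le_of_le_succ (h : ImmediateSucc r e e') {u : Idx a s t} (hue' : r.le u e')
    (hue : u ≠ e) (hue'' : u ≠ e') : r.le u e :=
  (r.total u e).resolve_right fun heu => (h.2.2 u heu hue').elim hue hue''

end ImmediateSucc

def IsInitial (r : Shuffle a s t) (D : Set (Idx a s t)) : Prop :=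
  ∀ u ∈ D, ∀ v ∉ D, r.le u v

section IsInitial

variable {r : Shuffle a s t} {D : Set (Idx a s t)} {e e' : Idx a s t}

lemma IsInitial.insert_succ (hD : IsInitial r D) (h : ImmediateSucc r e e') (he : e ∈ D) :
    IsInitial r (insert e' D) := by
  rintro u (rfl | hu) v hv
  · rw [Set.mem_insert_iff, not_or] at hv
    exact h.le_of_le (hD e he v hv.2) (fun hve => hv.2 (hve ▸ he)) hv.1
  · exact hD u hu v fun hvD => hv (Set.mem_insert_of_mem _ hvD)

lemma IsInitial.diff_pred (hD : IsInitial r D) (h : ImmediateSucc r e e') (he' : e' ∉ D) :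
    IsInitial r (D \ {e}) := by
  rintro u ⟨hu, hue⟩ v hv
  by_cases hvD : v ∈ D
  · obtain rfl : v = e := by simpa [hvD] using hv
    exact h.le_of_le_succ (hD u hu e' he') hue fun hue' => he' (hue' ▸ hu)
  · exact hD u hu v hvD

end IsInitial

/-- `S(s,x)`, as a subset of `S(s,t)`. -/
def below (x : Fin a → ℕ) : Set (Idx a s t) :=
  {u | u.1.2 ≤ x u.1.1}

lemma mem_below {x : Fin a → ℕ} {u : Idx a s t} : u ∈ below x ↔ u.1.2 ≤ x u.1.1 :=
  Iff.rfl

lemma Idx.ext_iff {u v : Idx a s t} : u = v ↔ u.1 = v.1 :=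
  Subtype.ext_iff

-- An anonymous constructor would elaborate at the subtype underlying `Idx a s t`, so that
-- `insert` and the `Set` lemmas below would no longer typecheck.
def Idx.of (i : Fin a) (c : ℕ) (h : s i < c ∧ c ≤ t i) : Idx a s t :=
  ⟨(i, c), h⟩

lemma below_update_succ (x : Fin a → ℕ) (i : Fin a) (c : ℕ) (h : s i < c + 1 ∧ c + 1 ≤ t i) :
    below (Function.update x i (c + 1)) =
      insert (Idx.of i (c + 1) h) (below (Function.update x i c)) := by
  ext u
  rw [Set.mem_insert_iff, mem_below, mem_below, Idx.ext_iff, Idx.of, Prod.ext_iff]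
  rcases eq_or_ne u.1.1 i with hj | hj
  · simp only [hj, Function.update_self, true_and]
    omega
  · simp [hj]

def Adjacent (r : Shuffle a s t) (i : Fin a) (c : ℕ) : Prop :=
  ∃ (h1 : s i < c) (h2 : c < t i),
    ImmediateSucc r (Idx.of i c ⟨h1, h2.le⟩) (Idx.of i (c + 1) ⟨Nat.lt_succ_of_lt h1, h2⟩)

section Moves

variable {r : Shuffle a s t} {x : Fin a → ℕ} {i : Fin a}

lemma IsInitial.below_update_succ {c : ℕ} (hD : IsInitial r (below (Function.update x i c)))
    (hc : Adjacent r i c) : IsInitial r (below (Function.update x i (c + 1))) := by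
  obtain ⟨h1, h2, hsucc⟩ := hc
  rw [GrayShuffle.below_update_succ x i c ⟨Nat.lt_succ_of_lt h1, h2⟩]
  exact hD.insert_succ hsucc (Function.update_self i c x).ge

lemma IsInitial.below_update_pred {c : ℕ}
    (hD : IsInitial r (below (Function.update x i (c + 1)))) (hc : Adjacent r i (c + 1)) :
    IsInitial r (below (Function.update x i c)) := by
  obtain ⟨h1, h2, hsucc⟩ := hc
  have hdiff := hD.diff_pred hsucc (show ¬c + 1 + 1 ≤ Function.update x i (c + 1) i by simp)
  rwa [GrayShuffle.below_update_succ x i c ⟨h1, h2.le⟩,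
    Set.insert_sdiff_self_of_notMem (s := below (Function.update x i c))
      (show ¬c + 1 ≤ Function.update x i c i by simp)] at hdiff

lemma IsInitial.below_update_add {m : ℕ} (hD : IsInitial r (below (Function.update x i m)))
    (k : ℕ) (hk : ∀ c, m ≤ c → c < m + k → Adjacent r i c) :
    IsInitial r (below (Function.update x i (m + k))) := by
  induction k with
  | zero => exact hD
  | succ k ih =>
    exact (ih fun c h1 h2 => hk c h1 (by omega)).below_update_succ (hk (m + k) (by omega)
      (by omega))

lemma IsInitial.below_update_of_add {m : ℕ} (k : ℕ)
    (hk : ∀ c, m < c → c ≤ m + k → Adjacent r i c)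
    (hD : IsInitial r (below (Function.update x i (m + k)))) :
    IsInitial r (below (Function.update x i m)) := by
  induction k with
  | zero => exact hD
  | succ k ih =>
    exact ih (fun c h1 h2 => hk c h1 (by omega))
      (hD.below_update_pred (hk (m + k + 1) (by omega) le_rfl))

lemma IsInitial.below_update_of_isRun {n : ℕ} (hD : IsInitial r (below x))
    (h : IsRun (Adjacent r i) (x i) n) : IsInitial r (below (Function.update x i n)) := by
  rw [← Function.update_eq_self i x] at hD
  rcases h with ⟨hle, hrun⟩ | ⟨hle, hrun⟩
  · obtain ⟨k, rfl⟩ := Nat.exists_eq_add_of_le hle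
    exact hD.below_update_add k hrun
  · obtain ⟨k, hk⟩ := Nat.exists_eq_add_of_le hle
    rw [hk] at hrun hD
    exact IsInitial.below_update_of_add k hrun hD

lemma IsInitial.below_of_isRun {y : Fin a → ℕ} (hD : IsInitial r (below x))
    (h : ∀ i, IsRun (Adjacent r i) (x i) (y i)) : IsInitial r (below y) := by
  suffices ∀ F : Finset (Fin a), IsInitial r (below (F.piecewise y x)) by
    simpa using this Finset.univ
  intro F
  induction F using Finset.induction_on with
  | empty => simpa using hD
  | insert j F hj ih =>
    rw [Finset.piecewise_insert]
    exact ih.below_update_of_isRun (Finset.piecewise_eq_of_notMem _ _ _ hj ▸ h j)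

end Moves

lemma isCutPoint_iff {r r' : Shuffle a s t} {x : Fin a → ℕ} :
    IsCutPoint r r' x ↔ (∀ i, s i ≤ x i ∧ x i ≤ t i) ∧ s ≠ x ∧ x ≠ t ∧
      IsInitial r (below x) ∧ IsInitial r' (below x) :=
  ⟨fun ⟨hb, hs, ht, h⟩ => ⟨hb, hs, ht, fun u hu v hv => (h u v hu (not_le.mp hv)).1,
      fun u hu v hv => (h u v hu (not_le.mp hv)).2⟩,
    fun ⟨hb, hs, ht, h, h'⟩ => ⟨hb, hs, ht, fun u v hu hv =>
      ⟨h u hu v (not_le.mpr hv), h' u hu v (not_le.mpr hv)⟩⟩⟩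

/-- The cut at height `c` of coordinate `i` fails to be right-angled. -/
def Straight (r r' : Shuffle a s t) (i : Fin a) (c : ℕ) : Prop :=
  Adjacent r i c ∧ Adjacent r' i c

lemma isRightAngledCutPoint_of_not_straight {r r' : Shuffle a s t} {x : Fin a → ℕ}
    (hx : IsCutPoint r r' x) (h : ∀ i, ¬Straight r r' i (x i)) :
    IsRightAngledCutPoint r r' x :=
  ⟨hx, fun i h1 h2 => not_and_or.mp fun ⟨h₀, h₁⟩ => h i ⟨⟨h1, h2, h₀⟩, h1, h2, h₁⟩⟩

lemma IsCutPoint.of_isRun {r r' : Shuffle a s t} {x y : Fin a → ℕ} (hx : IsCutPoint r r' x)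
    (hrun : ∀ i, IsRun (Straight r r' i) (x i) (y i)) (hbd : ∀ i, s i ≤ y i ∧ y i ≤ t i)
    (hsy : s ≠ y) (hyt : y ≠ t) : IsCutPoint r r' y := by
  obtain ⟨-, -, -, h, h'⟩ := isCutPoint_iff.mp hx
  exact isCutPoint_iff.mpr ⟨hbd, hsy, hyt, h.below_of_isRun fun i => (hrun i).mono fun _ hc => hc.1,
    h'.below_of_isRun fun i => (hrun i).mono fun _ hc => hc.2⟩

lemma exists_piecewise_ne_ne {x l u : Fin a → ℕ} (hsl : s ≤ l) (hlx : l ≤ x) (hxu : x ≤ u)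
    (hsx : s ≠ x) (hxt : x ≠ t) (hnl : NonLinear s t) :
    ∃ F : Finset (Fin a), s ≠ F.piecewise u l ∧ F.piecewise u l ≠ t := by
  by_cases hu : u = t
  · by_cases hl : l = s
    · obtain ⟨i, j, hij, hi, hj⟩ := hnl
      refine ⟨{i}, fun h => ?_, fun h => ?_⟩
      · have := congrFun h i
        simp only [Finset.piecewise_singleton, Function.update_self, hu] at this
        omega
      · have := congrFun h j
        simp only [Finset.piecewise_singleton, Function.update_of_ne hij.symm, hl] at this
        omega
    · refine ⟨∅, by simpa using Ne.symm hl, fun hlt => hxt ?_⟩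
      rw [Finset.piecewise_empty] at hlt
      exact le_antisymm (hu ▸ hxu) (hlt ▸ hlx)
  · refine ⟨Finset.univ, fun hsu => hsx ?_, by simpa using hu⟩
    rw [Finset.piecewise_univ] at hsu
    exact le_antisymm (hsl.trans hlx) (hsu ▸ hxu)

theorem statement6_general (a : ℕ) (s t : Fin a → ℕ)
    (r₀ r₁ : Shuffle a s t)
    (hnl : NonLinear s t) (hcut : ∃ x, IsCutPoint r₀ r₁ x) :
    ∃ x, IsRightAngledCutPoint r₀ r₁ x := by
  obtain ⟨x, hx⟩ := hcut
  obtain ⟨hbd, hsx, hxt, -⟩ := id hx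
  choose l hsl hlx hl hrunl using fun i =>
    exists_isRun_le (Straight r₀ r₁ i) (hbd i).1 fun h => lt_irrefl _ h.1.1
  choose u hxu hut hu hrunu using fun i =>
    exists_isRun_ge (Straight r₀ r₁ i) (hbd i).2 fun h => lt_irrefl _ h.1.2.1
  obtain ⟨F, hsF, hFt⟩ := exists_piecewise_ne_ne hsl hlx hxu hsx hxt hnl
  refine ⟨F.piecewise u l, isRightAngledCutPoint_of_not_straight
    (hx.of_isRun (fun i => ?_) (fun i => ⟨?_, ?_⟩) hsF hFt) fun i => ?_⟩
  · exact F.piecewise_cases u l (IsRun _ (x i)) (hrunu i) (hrunl i)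
  · exact F.piecewise_cases u l (s i ≤ ·) ((hsl i).trans ((hlx i).trans (hxu i))) (hsl i)
  · exact F.piecewise_cases u l (· ≤ t i) (hut i) ((hlx i).trans ((hxu i).trans (hut i)))
  · exact F.piecewise_cases u l (¬Straight r₀ r₁ i ·) (hu i) (hl i)

/-- Let `⪯₀ ⊴ ⪯₁` be shuffles on `S(s,t)` such that the pair `(s,t)`
is non-linear and the pair `(⪯₀, ⪯₁)` admits a cut-point.  Then `(⪯₀, ⪯₁)` admits a
right-angled cut-point. -/
theorem statement6 (a : ℕ) (ha : 1 ≤ a) (s t : Fin a → ℕ) (hst : ∀ i, s i ≤ t i)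
    (r₀ r₁ : Shuffle a s t) (hdom : Dominates r₀ r₁)
    (hnl : NonLinear s t) (hcut : ∃ x, IsCutPoint r₀ r₁ x) :
    ∃ x, IsRightAngledCutPoint r₀ r₁ x :=
  statement6_general a s t r₀ r₁ hnl hcut

end GrayShuffle
end
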